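/- arXiv:1711.01936 — 8 statements merged into one kernel-verified Lean document; each statement's English description precedes it below -/
import Mathlib

section
/- Let ν ∈ (0,1), let x, y, e ∈ H and let β > 0 satisfy β‖F(x) − F(y − e)‖ ≤ ν‖x − y + e‖. Define d = (x − y + e) − β(F(x) − F(y − e)) and φ = ⟨x − y + e, d⟩. Then φ ≥ (1 − ν)‖x − y + e‖², ‖d‖² ≤ (1 + ν²)‖x − y + e‖², and consequently (1 + ν²)·φ ≥ (1 − ν)·‖d‖² (i.e., if d ≠ 0 then φ/‖d‖² ≥ (1 − ν)/(1 + ν²)). -/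
open RealInnerProductSpace

theorem stmt_2 {H : Type*} [NormedAddCommGroup H] [InnerProductSpace ℝ H]
    [CompleteSpace H]
    (F : H → H) (hmono : ∀ u v : H, 0 ≤ ⟪F u - F v, u - v⟫)
    (ν : ℝ) (hν : ν ∈ Set.Ioo (0 : ℝ) 1)
    (x y e : H) (β : ℝ) (hβ : 0 < β)
    (hstep : β * ‖F x - F (y - e)‖ ≤ ν * ‖x - y + e‖) :
    (1 - ν) * ‖x - y + e‖ ^ 2 ≤
        ⟪x - y + e, (x - y + e) - β • (F x - F (y - e))⟫ ∧
    ‖(x - y + e) - β • (F x - F (y - e))‖ ^ 2 ≤ (1 + ν ^ 2) * ‖x - y + e‖ ^ 2 ∧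
    (1 - ν) * ‖(x - y + e) - β • (F x - F (y - e))‖ ^ 2 ≤
        (1 + ν ^ 2) * ⟪x - y + e, (x - y + e) - β • (F x - F (y - e))⟫ := by
  set w : H := x - y + e with hw
  set g : H := F x - F (y - e) with hg
  have hxy : x - (y - e) = w := by rw [hw]; abel
  have hgw : 0 ≤ ⟪g, w⟫ := by
    have := hmono x (y - e); rwa [hxy] at this
  have hwg : 0 ≤ ⟪w, g⟫ := by rwa [real_inner_comm] at hgw
  have hb : β * ‖g‖ ≤ ν * ‖w‖ := hstep
  have hbw : β * ⟪w, g⟫ ≤ ν * ‖w‖ ^ 2 := by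
    calc β * ⟪w, g⟫ ≤ β * (‖w‖ * ‖g‖) := by
          have := real_inner_le_norm w g
          nlinarith
      _ = (β * ‖g‖) * ‖w‖ := by ring
      _ ≤ (ν * ‖w‖) * ‖w‖ := by
          have : (0:ℝ) ≤ ‖w‖ := norm_nonneg _
          nlinarith
      _ = ν * ‖w‖ ^ 2 := by ring
  have hphi : ⟪w, w - β • g⟫ = ‖w‖ ^ 2 - β * ⟪w, g⟫ := by
    rw [inner_sub_right, real_inner_smul_right, real_inner_self_eq_norm_sq]
  have h1 : (1 - ν) * ‖w‖ ^ 2 ≤ ⟪w, w - β • g⟫ := by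
    rw [hphi]; nlinarith
  have hd : ‖w - β • g‖ ^ 2 = ‖w‖ ^ 2 - 2 * (β * ⟪w, g⟫) + β ^ 2 * ‖g‖ ^ 2 := by
    rw [norm_sub_sq_real, real_inner_smul_right, norm_smul, Real.norm_eq_abs,
      abs_of_pos hβ, mul_pow]
  have h2 : ‖w - β • g‖ ^ 2 ≤ (1 + ν ^ 2) * ‖w‖ ^ 2 := by
    rw [hd]
    have hg0 : (0:ℝ) ≤ ‖g‖ := norm_nonneg _
    have hw0 : (0:ℝ) ≤ ‖w‖ := norm_nonneg _
    have hsq : (β * ‖g‖) ^ 2 ≤ (ν * ‖w‖) ^ 2 :=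
      pow_le_pow_left₀ (by positivity) hb 2
    nlinarith [hβ.le, hwg, hν.1, hsq]
  refine ⟨h1, h2, ?_⟩
  have hν1 : ν < 1 := hν.2
  have hν0 : 0 < ν := hν.1
  nlinarith [sq_nonneg ν, norm_nonneg w, sq_nonneg ‖w‖]
end

section
/- (Convergence of the PC-algorithm I with outer perturbations.) Let ν ∈ (0,1) and γ ∈ (0,2). Let {e1^k}, {e2^k} be sequences in H with Σ_{k=0}^∞ ‖e1^k‖ < +∞ and Σ_{k=0}^∞ ‖e2^k‖ < +∞. Let x^0 ∈ H and let {x^k}, {y^k}, {β_k} satisfy, for every k ≥ 0: β_k > 0 with inf_k β_k > 0; y^k = P_C(x^k − β_k F(x^k)) + e1^k; β_k‖F(x^k) − F(y^k − e1^k)‖ ≤ ν‖x^k − y^k + e1^k‖; d^k := (x^k − y^k + e1^k) − β_k(F(x^k) − F(y^k − e1^k)) ≠ 0; ρ_k := ⟨x^k − y^k + e1^k, d^k⟩ / ‖d^k‖²; and x^{k+1} = x^k − γ ρ_k d^k + e2^k. Then {x^k} converges weakly (i.e., ⟨x^k, u⟩ → ⟨x̂, u⟩ for every u ∈ H) to some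 point x̂ ∈ SOL(C,F). -/
/-!
Write `z k = y k - e1 k` for the exact projection `P (x k - β k • F (x k))` and `w k = x k - z k`
for the residual. For every solution `q`, the step before the perturbation `e2 k` is a relaxed
projection onto a half-space separating `x k` from `q`, which gives the descent estimate
`‖x k - γ ρ k d k - q‖² + γ (2 - γ) ((1 - ν) / (1 + ν))² ‖w k‖² ≤ ‖x k - q‖²`.
With `∑ ‖e2 k‖ < ∞` this makes `‖x k - q‖` convergent for every solution `q` (quasi-Fejér
monotonicity) and forces `w k → 0`. A weak cluster point of `x` is then a weak limit of the points
`z k ∈ C`, which solve the variational inequality up to a vanishing residual; by monotonicity it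
is a Minty solution, hence a solution because `F` is continuous. Opial's argument turns this into
weak convergence of the whole sequence; weak cluster points are produced along ultrafilters, by
Banach–Alaoglu and the Riesz representation.
-/

open RealInnerProductSpace Filter Topology

theorem exists_tendsto_of_le_add_summable {a ε : ℕ → ℝ} (ha : ∀ k, 0 ≤ a k)
    (hε : ∀ k, 0 ≤ ε k) (hεs : Summable ε) (hrec : ∀ k, a (k + 1) ≤ a k + ε k) :
    ∃ l, Tendsto a atTop (𝓝 l) := by
  set b : ℕ → ℝ := fun k => a k - ∑ j ∈ Finset.range k, ε j
  have hanti : Antitone b := antitone_nat_of_succ_le fun k => by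
    simp only [b, Finset.sum_range_succ]
    linarith [hrec k]
  have hbdd : BddBelow (Set.range b) := by
    refine ⟨-∑' j, ε j, ?_⟩
    rintro _ ⟨k, rfl⟩
    linarith [ha k, hεs.sum_le_tsum (Finset.range k) (fun j _ => hε j)]
  refine ⟨_, ((tendsto_atTop_ciInf hanti hbdd).add hεs.hasSum.tendsto_sum_nat).congr
    fun k => ?_⟩
  simp [b]

theorem tendsto_zero_of_sq_add_le_sq {a b s ε : ℕ → ℝ} {l : ℝ}
    (ha : Tendsto a atTop (𝓝 l)) (hε : Tendsto ε atTop (𝓝 0)) (ha0 : ∀ k, 0 ≤ a k)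
    (hb0 : ∀ k, 0 ≤ b k) (hs0 : ∀ k, 0 ≤ s k) (hsq : ∀ k, b k ^ 2 + s k ≤ a k ^ 2)
    (hrec : ∀ k, a (k + 1) ≤ b k + ε k) : Tendsto s atTop (𝓝 0) := by
  have hs : ∀ k, s k ≤ 2 * a k * (a k - a (k + 1) + ε k) := fun k => by
    have hba : b k ≤ a k := (sq_le_sq₀ (hb0 k) (ha0 k)).1 (by linarith [hsq k, hs0 k])
    nlinarith [hsq k, hrec k, ha0 k, hb0 k]
  have hlim : Tendsto (fun k => 2 * a k * (a k - a (k + 1) + ε k)) atTop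
      (𝓝 (2 * l * (l - l + 0))) :=
    (ha.const_mul 2).mul ((ha.sub (ha.comp (tendsto_add_atTop_nat 1))).add hε)
  rw [sub_self, zero_add, mul_zero] at hlim
  exact squeeze_zero hs0 hs hlim

section

variable {E : Type*} [SeminormedAddCommGroup E]

theorem exists_norm_le_of_tendsto_norm_sub {x : ℕ → E} {p : E} {r : ℝ}
    (h : Tendsto (fun k => ‖x k - p‖) atTop (𝓝 r)) : ∃ M, ∀ k, ‖x k‖ ≤ M := by
  obtain ⟨M, hM⟩ := h.bddAbove_range
  exact ⟨M + ‖p‖, fun k => by linarith [norm_le_norm_sub_add (x k) p, hM ⟨k, rfl⟩]⟩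

theorem tendsto_of_sq_norm_sub_add_le {x v e : ℕ → E} {s : ℕ → ℝ} {q : E}
    (he : Summable fun k => ‖e k‖) (hx : ∀ k, x (k + 1) = v k + e k) (hs : ∀ k, 0 ≤ s k)
    (hdesc : ∀ k, ‖v k - q‖ ^ 2 + s k ≤ ‖x k - q‖ ^ 2) :
    (∃ r, Tendsto (fun k => ‖x k - q‖) atTop (𝓝 r)) ∧ Tendsto s atTop (𝓝 0) := by
  have hnext : ∀ k, ‖x (k + 1) - q‖ ≤ ‖v k - q‖ + ‖e k‖ := fun k => by
    rw [hx k, add_sub_right_comm]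
    exact norm_add_le _ _
  have hv : ∀ k, ‖v k - q‖ ≤ ‖x k - q‖ := fun k =>
    (sq_le_sq₀ (norm_nonneg _) (norm_nonneg _)).1 (by linarith [hdesc k, hs k])
  obtain ⟨r, hr⟩ := exists_tendsto_of_le_add_summable (a := fun k => ‖x k - q‖)
    (fun _ => norm_nonneg _) (fun _ => norm_nonneg _) he fun k => by linarith [hnext k, hv k]
  exact ⟨⟨r, hr⟩, tendsto_zero_of_sq_add_le_sq hr he.tendsto_atTop_zero (fun _ => norm_nonneg _)
    (fun _ => norm_nonneg _) hs hdesc hnext⟩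

end

section

variable {H ι : Type*} [NormedAddCommGroup H] [InnerProductSpace ℝ H]

def WeakTendsto (x : ι → H) (l : Filter ι) (a : H) : Prop :=
  ∀ u : H, Tendsto (fun i => ⟪x i, u⟫) l (𝓝 ⟪a, u⟫)

theorem WeakTendsto.of_tendsto_norm_sub {x z : ι → H} {l : Filter ι} {a : H}
    (hx : WeakTendsto x l a) (hxz : Tendsto (fun i => ‖x i - z i‖) l (𝓝 0)) :
    WeakTendsto z l a := by
  intro u
  have hsmall : Tendsto (fun i => ⟪x i - z i, u⟫) l (𝓝 0) :=
    squeeze_zero_norm (fun i => abs_real_inner_le_norm _ _) (by simpa using hxz.mul_const ‖u‖)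
  simpa [inner_sub_left] using (hx u).sub hsmall

theorem Convex.mem_of_weakTendsto [CompleteSpace H] {C : Set H} (hCcv : Convex ℝ C)
    (hCcl : IsClosed C) {z : ι → H} {l : Filter ι} [l.NeBot] {a : H}
    (hzC : ∀ᶠ i in l, z i ∈ C) (hz : WeakTendsto z l a) : a ∈ C := by
  by_contra ha
  obtain ⟨f, r, hfC, hfa⟩ := geometric_hahn_banach_closed_point hCcv hCcl ha
  set v := (InnerProductSpace.toDual ℝ H).symm f
  have hf : ∀ w, f w = ⟪w, v⟫ := fun w => by
    rw [real_inner_comm, InnerProductSpace.toDual_symm_apply]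
  have : ⟪a, v⟫ ≤ r :=
    le_of_tendsto (hz v) (hzC.mono fun i hi => by simpa [hf] using (hfC _ hi).le)
  linarith [hf a]

theorem exists_weakTendsto_of_norm_le [CompleteSpace H] {x : ι → H} {M : ℝ}
    (hx : ∀ i, ‖x i‖ ≤ M) (U : Ultrafilter ι) : ∃ a, WeakTendsto x U a := by
  set φ : ι → WeakDual ℝ H := fun i => StrongDual.toWeakDual (innerSL ℝ (x i))
  have hK := WeakDual.isCompact_closedBall (𝕜 := ℝ) (E := H) 0 M
  obtain ⟨ψ, -, hψ⟩ := hK.ultrafilter_le_nhds (U.map φ) (by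
    refine le_principal_iff.2 (mem_map.2 (univ_mem' fun i => ?_))
    simpa [φ] using (innerSL_apply_norm ℝ (x i)).le.trans (hx i))
  refine ⟨(InnerProductSpace.toDual ℝ H).symm (WeakDual.toStrongDual ψ), fun u => ?_⟩
  rw [InnerProductSpace.toDual_symm_apply]
  exact ((WeakDual.eval_continuous u).tendsto ψ).comp hψ

theorem WeakTendsto.eq_of_tendsto_norm_sub {x : ι → H} {l U V : Filter ι} [U.NeBot] [V.NeBot]
    (hU : U ≤ l) (hV : V ≤ l) {a b : H} {ra rb : ℝ}
    (ha : Tendsto (fun i => ‖x i - a‖) l (𝓝 ra)) (hb : Tendsto (fun i => ‖x i - b‖) l (𝓝 rb))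
    (hxa : WeakTendsto x U a) (hxb : WeakTendsto x V b) : a = b := by
  -- `⟪x i, a - b⟫` is determined by `‖x i - a‖` and `‖x i - b‖`, so it converges along `l`
  have hid : ∀ i, ⟪x i, a - b⟫ = (‖x i - b‖ ^ 2 - ‖x i - a‖ ^ 2 + ‖a‖ ^ 2 - ‖b‖ ^ 2) / 2 :=
    fun i => by rw [norm_sub_sq_real, norm_sub_sq_real, inner_sub_right]; ring
  set c := (rb ^ 2 - ra ^ 2 + ‖a‖ ^ 2 - ‖b‖ ^ 2) / 2
  have hlim : Tendsto (fun i => ⟪x i, a - b⟫) l (𝓝 c) := by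
    simp only [hid]
    exact (((hb.pow 2).sub (ha.pow 2)).add_const _ |>.sub_const _).div_const 2
  have hac : ⟪a, a - b⟫ = c := tendsto_nhds_unique (hxa _) (hlim.mono_left hU)
  have hbc : ⟪b, a - b⟫ = c := tendsto_nhds_unique (hxb _) (hlim.mono_left hV)
  have : ⟪a - b, a - b⟫ = 0 := by rw [inner_sub_left, hac, hbc, sub_self]
  exact sub_eq_zero.1 (inner_self_eq_zero.1 this)

theorem exists_weakTendsto_of_tendsto_norm_sub [CompleteSpace H] {x : ℕ → H} {S : Set H}
    (hS : S.Nonempty) (hconv : ∀ p ∈ S, ∃ r, Tendsto (fun k => ‖x k - p‖) atTop (𝓝 r))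
    (hcluster : ∀ U : Ultrafilter ℕ, ↑U ≤ (atTop : Filter ℕ) → ∀ a, WeakTendsto x ↑U a → a ∈ S) :
    ∃ a ∈ S, WeakTendsto x atTop a := by
  obtain ⟨p, hp⟩ := hS
  obtain ⟨M, hx⟩ := exists_norm_le_of_tendsto_norm_sub (hconv p hp).choose_spec
  have hlim : ∀ U : Ultrafilter ℕ, ↑U ≤ (atTop : Filter ℕ) → ∃ a ∈ S, WeakTendsto x ↑U a := by
    intro U hU
    obtain ⟨a, ha⟩ := exists_weakTendsto_of_norm_le hx U
    exact ⟨a, hcluster U hU a ha, ha⟩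
  obtain ⟨a, haS, ha⟩ := hlim _ (Ultrafilter.of_le atTop)
  refine ⟨a, haS, fun u => (tendsto_iff_ultrafilter _ _ _).2 fun U hU => ?_⟩
  obtain ⟨b, hbS, hb⟩ := hlim U hU
  obtain ⟨ra, hra⟩ := hconv a haS
  obtain ⟨rb, hrb⟩ := hconv b hbS
  rw [← hb.eq_of_tendsto_norm_sub hU (Ultrafilter.of_le atTop) hrb hra ha]
  exact hb u

def solVI (C : Set H) (F : H → H) : Set H :=
  {p | p ∈ C ∧ ∀ z ∈ C, 0 ≤ ⟪F p, z - p⟫}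

theorem mem_solVI_of_minty {C : Set H} (hCcv : Convex ℝ C) {F : H → H} (hF : Continuous F)
    {a : H} (ha : a ∈ C) (h : ∀ c ∈ C, 0 ≤ ⟪F c, c - a⟫) : a ∈ solVI C F := by
  refine ⟨ha, fun c hc => ?_⟩
  set g : ℝ → H := fun t => a + t • (c - a)
  have hg : Tendsto (fun t => F (g t)) (𝓝[>] 0) (𝓝 (F a)) := by
    have : Continuous (fun t => F (g t)) := by fun_prop
    simpa [g] using (this.tendsto 0).mono_left nhdsWithin_le_nhds
  have hpos : ∀ᶠ t in 𝓝[>] (0 : ℝ), 0 ≤ ⟪F (g t), c - a⟫ := by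
    filter_upwards [Ioo_mem_nhdsGT one_pos] with t ht
    have hgt : g t - a = t • (c - a) := by simp [g]
    have := h (g t) (hCcv.add_smul_sub_mem ha hc ⟨ht.1.le, ht.2.le⟩)
    rw [hgt, real_inner_smul_right] at this
    exact nonneg_of_mul_nonneg_right (by linarith) ht.1
  exact ge_of_tendsto (hg.inner tendsto_const_nhds) hpos

theorem minty_of_weakTendsto {C : Set H} {F : H → H}
    (hmono : ∀ u v, 0 ≤ ⟪F u - F v, u - v⟫) {z v : ι → H} {l : Filter ι} [l.NeBot] {a : H}
    {M : ℝ} (hzM : ∀ᶠ i in l, ‖z i‖ ≤ M) (hv : Tendsto (fun i => ‖v i‖) l (𝓝 0))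
    (happrox : ∀ i, ∀ c ∈ C, 0 ≤ ⟪F (z i) - v i, c - z i⟫) (hz : WeakTendsto z l a) :
    ∀ c ∈ C, 0 ≤ ⟪F c, c - a⟫ := by
  intro c hc
  have hlow : ∀ i, -(‖v i‖ * ‖c - z i‖) ≤ ⟪F c, c - z i⟫ := fun i => by
    have h1 := happrox i c hc
    have h2 := hmono c (z i)
    have h3 := neg_le_of_abs_le (abs_real_inner_le_norm (v i) (c - z i))
    rw [inner_sub_left] at h1 h2
    linarith
  have hlowM : ∀ᶠ i in l, -(‖v i‖ * (‖c‖ + M)) ≤ ⟪F c, c - z i⟫ := hzM.mono fun i hi => by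
    have : ‖c - z i‖ ≤ ‖c‖ + M := (norm_sub_le _ _).trans (by linarith)
    nlinarith [hlow i, norm_nonneg (v i)]
  have hlim : Tendsto (fun i => ⟪F c, c - z i⟫) l (𝓝 ⟪F c, c - a⟫) := by
    simpa only [inner_sub_right, real_inner_comm (F c)] using
      (tendsto_const_nhds (x := ⟪F c, c⟫)).sub (hz (F c))
  have h0 : Tendsto (fun i => -(‖v i‖ * (‖c‖ + M))) l (𝓝 0) := by
    simpa using (hv.mul_const (‖c‖ + M)).neg
  exact le_of_tendsto_of_tendsto h0 hlim hlowM

theorem one_sub_mul_sq_le_inner_sub_smul {w D : H} {β ν : ℝ} (hβ : 0 ≤ β)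
    (h : β * ‖D‖ ≤ ν * ‖w‖) : (1 - ν) * ‖w‖ ^ 2 ≤ ⟪w, w - β • D⟫ := by
  rw [inner_sub_right, real_inner_smul_right, real_inner_self_eq_norm_sq]
  nlinarith [real_inner_le_norm w D, norm_nonneg w]

theorem norm_sub_smul_le_one_add_mul {w D : H} {β ν : ℝ} (hβ : 0 ≤ β)
    (h : β * ‖D‖ ≤ ν * ‖w‖) : ‖w - β • D‖ ≤ (1 + ν) * ‖w‖ := by
  calc ‖w - β • D‖ ≤ ‖w‖ + β * ‖D‖ := by
        simpa [norm_smul, abs_of_nonneg hβ] using norm_sub_le w (β • D)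
    _ ≤ (1 + ν) * ‖w‖ := by linarith

theorem mul_sq_norm_le_inner_sq_div {w d : H} {ν : ℝ} (hν0 : 0 ≤ ν) (hν1 : ν < 1)
    (hwd : (1 - ν) * ‖w‖ ^ 2 ≤ ⟪w, d⟫) (hd : ‖d‖ ≤ (1 + ν) * ‖w‖) :
    ((1 - ν) / (1 + ν)) ^ 2 * ‖w‖ ^ 2 ≤ ⟪w, d⟫ ^ 2 / ‖d‖ ^ 2 := by
  rcases eq_or_ne d 0 with rfl | hd0
  · rw [inner_zero_right] at hwd
    have hw : ‖w‖ ^ 2 ≤ 0 := nonpos_of_mul_nonpos_right hwd (sub_pos.2 hν1)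
    simp [le_antisymm hw (sq_nonneg _)]
  rw [le_div_iff₀ (by positivity)]
  have hc : ((1 - ν) / (1 + ν)) ^ 2 * (1 + ν) ^ 2 = (1 - ν) ^ 2 := by field_simp
  calc ((1 - ν) / (1 + ν)) ^ 2 * ‖w‖ ^ 2 * ‖d‖ ^ 2
      ≤ ((1 - ν) / (1 + ν)) ^ 2 * ‖w‖ ^ 2 * ((1 + ν) * ‖w‖) ^ 2 := by gcongr
    _ = ((1 - ν) * ‖w‖ ^ 2) ^ 2 := by linear_combination ‖w‖ ^ 4 * hc
    _ ≤ ⟪w, d⟫ ^ 2 := pow_le_pow_left₀ (by nlinarith [sq_nonneg ‖w‖]) hwd 2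

theorem norm_sub_smul_sub_sq_add_le {x q w d : H} {ν γ : ℝ} (hν0 : 0 ≤ ν) (hν1 : ν < 1)
    (hγ0 : 0 ≤ γ) (hγ2 : γ ≤ 2) (hwd : (1 - ν) * ‖w‖ ^ 2 ≤ ⟪w, d⟫)
    (hd : ‖d‖ ≤ (1 + ν) * ‖w‖) (hq : ⟪w, d⟫ ≤ ⟪x - q, d⟫) :
    ‖x - (γ * (⟪w, d⟫ / ‖d‖ ^ 2)) • d - q‖ ^ 2 + γ * (2 - γ) * ((1 - ν) / (1 + ν)) ^ 2 * ‖w‖ ^ 2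
      ≤ ‖x - q‖ ^ 2 := by
  set ρ := ⟪w, d⟫ / ‖d‖ ^ 2
  have hρ0 : 0 ≤ ρ := div_nonneg (le_trans (by nlinarith [sq_nonneg ‖w‖]) hwd) (sq_nonneg _)
  have hρd : ρ * ‖d‖ ^ 2 = ⟪w, d⟫ :=
    div_mul_cancel_of_imp fun h => by simp [norm_eq_zero.1 (pow_eq_zero_iff two_ne_zero |>.1 h)]
  have hlow : ((1 - ν) / (1 + ν)) ^ 2 * ‖w‖ ^ 2 ≤ ρ * ⟪w, d⟫ := by
    rw [div_mul_eq_mul_div, ← sq]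
    exact mul_sq_norm_le_inner_sq_div hν0 hν1 hwd hd
  have hexp : ‖x - (γ * ρ) • d - q‖ ^ 2
      = ‖x - q‖ ^ 2 - 2 * (γ * ρ) * ⟪x - q, d⟫ + (γ * ρ) ^ 2 * ‖d‖ ^ 2 := by
    rw [show x - (γ * ρ) • d - q = (x - q) - (γ * ρ) • d by abel, norm_sub_sq_real,
      real_inner_smul_right, norm_smul, Real.norm_eq_abs, abs_of_nonneg (by positivity)]
    ring
  have hγρ : γ * ρ * ⟪w, d⟫ ≤ γ * ρ * ⟪x - q, d⟫ := mul_le_mul_of_nonneg_left hq (by positivity)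
  have hγ : 0 ≤ γ * (2 - γ) := mul_nonneg hγ0 (by linarith)
  have hsq : (γ * ρ) ^ 2 * ‖d‖ ^ 2 = γ * γ * (ρ * ⟪w, d⟫) := by rw [← hρd]; ring
  rw [hexp, hsq]
  linarith [mul_le_mul_of_nonneg_left hlow hγ]

variable {C : Set H} {F : H → H}

theorem inner_sub_pc_direction_nonneg (hmono : ∀ u v, 0 ≤ ⟪F u - F v, u - v⟫)
    {x z q : H} {β : ℝ} (hβ : 0 ≤ β) (hzC : z ∈ C)
    (hproj : ∀ c ∈ C, ⟪x - β • F x - z, c - z⟫ ≤ 0) (hq : q ∈ solVI C F) :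
    0 ≤ ⟪z - q, x - z - β • (F x - F z)⟫ := by
  have hsplit : x - z - β • (F x - F z) = (x - β • F x - z) + β • F z := by
    rw [smul_sub]; abel
  have hproj_q : 0 ≤ ⟪z - q, x - β • F x - z⟫ := by
    have := hproj q hq.1
    rw [real_inner_comm, ← neg_sub q z, inner_neg_right]
    linarith
  have hFz : 0 ≤ ⟪z - q, F z⟫ := by
    have h1 := hmono z q
    have h2 := hq.2 z hzC
    rw [inner_sub_left] at h1
    rw [real_inner_comm]
    linarith
  rw [hsplit, inner_add_right, real_inner_smul_right]
  positivity

theorem norm_pc_step_sq_add_le (hmono : ∀ u v, 0 ≤ ⟪F u - F v, u - v⟫)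
    {x z q d : H} {β ν γ : ℝ} (hβ : 0 ≤ β) (hν0 : 0 ≤ ν) (hν1 : ν < 1) (hγ0 : 0 ≤ γ)
    (hγ2 : γ ≤ 2) (hzC : z ∈ C) (hproj : ∀ c ∈ C, ⟪x - β • F x - z, c - z⟫ ≤ 0)
    (hq : q ∈ solVI C F) (hstep : β * ‖F x - F z‖ ≤ ν * ‖x - z‖)
    (hd : d = x - z - β • (F x - F z)) :
    ‖x - (γ * (⟪x - z, d⟫ / ‖d‖ ^ 2)) • d - q‖ ^ 2
      + γ * (2 - γ) * ((1 - ν) / (1 + ν)) ^ 2 * ‖x - z‖ ^ 2 ≤ ‖x - q‖ ^ 2 := by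
  subst hd
  refine norm_sub_smul_sub_sq_add_le hν0 hν1 hγ0 hγ2
    (one_sub_mul_sq_le_inner_sub_smul hβ hstep) (norm_sub_smul_le_one_add_mul hβ hstep) ?_
  have := inner_sub_pc_direction_nonneg hmono hβ hzC hproj hq
  rw [show x - q = (x - z) + (z - q) by abel, inner_add_left]
  linarith

theorem mem_solVI_of_weakTendsto_pc [CompleteSpace H] (hCcv : Convex ℝ C) (hCcl : IsClosed C)
    (hmono : ∀ u v, 0 ≤ ⟪F u - F v, u - v⟫) (hF : Continuous F) {x z : ι → H} {β : ι → ℝ}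
    {b ν M : ℝ} (hb : 0 < b) (hbβ : ∀ i, b ≤ β i) (hzC : ∀ i, z i ∈ C)
    (hproj : ∀ i, ∀ c ∈ C, ⟪x i - β i • F (x i) - z i, c - z i⟫ ≤ 0)
    (hstep : ∀ i, β i * ‖F (x i) - F (z i)‖ ≤ ν * ‖x i - z i‖) (hxM : ∀ i, ‖x i‖ ≤ M)
    {l : Filter ι} [l.NeBot] (hw : Tendsto (fun i => ‖x i - z i‖) l (𝓝 0)) {a : H}
    (ha : WeakTendsto x l a) : a ∈ solVI C F := by
  have hz : WeakTendsto z l a := ha.of_tendsto_norm_sub hw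
  have haC : a ∈ C := hCcv.mem_of_weakTendsto hCcl (Eventually.of_forall hzC) hz
  have hβ : ∀ i, 0 < β i := fun i => hb.trans_le (hbβ i)
  -- `z i` solves the variational inequality up to the residual `v i`
  set v : ι → H := fun i => F (z i) - F (x i) + (β i)⁻¹ • (x i - z i)
  have hzM : ∀ᶠ i in l, ‖z i‖ ≤ M + 1 := (hw.eventually (ge_mem_nhds one_pos)).mono
    fun i hi => by
      linarith [norm_le_norm_add_norm_sub' (z i) (x i), norm_sub_rev (z i) (x i), hxM i]
  have hv : Tendsto (fun i => ‖v i‖) l (𝓝 0) := by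
    refine squeeze_zero (fun i => norm_nonneg _) (fun i => ?_)
      (by simpa using hw.const_mul ((ν + 1) / b))
    have hF : ‖F (z i) - F (x i)‖ ≤ ν / b * ‖x i - z i‖ := by
      rw [norm_sub_rev, div_mul_eq_mul_div, le_div_iff₀ hb]
      nlinarith [hstep i, hbβ i, norm_nonneg (F (x i) - F (z i))]
    have hinv : (β i)⁻¹ * ‖x i - z i‖ ≤ b⁻¹ * ‖x i - z i‖ :=
      mul_le_mul_of_nonneg_right (inv_anti₀ hb (hbβ i)) (norm_nonneg _)
    calc ‖v i‖ ≤ ‖F (z i) - F (x i)‖ + (β i)⁻¹ * ‖x i - z i‖ := by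
          simpa [v, norm_smul, abs_of_pos (hβ i)] using
            norm_add_le (F (z i) - F (x i)) ((β i)⁻¹ • (x i - z i))
      _ ≤ (ν + 1) / b * ‖x i - z i‖ := by rw [add_div, add_mul, one_div]; linarith
  have happrox : ∀ i, ∀ c ∈ C, 0 ≤ ⟪F (z i) - v i, c - z i⟫ := fun i c hc => by
    have hres : F (z i) - v i = -(β i)⁻¹ • (x i - β i • F (x i) - z i) := by
      simp only [v, smul_sub, smul_smul, neg_mul, inv_mul_cancel₀ (hβ i).ne', neg_smul, one_smul]
      abel
    rw [hres, real_inner_smul_left]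
    exact mul_nonneg_of_nonpos_of_nonpos (by simpa using (hβ i).le) (hproj i c hc)
  exact mem_solVI_of_minty hCcv hF haC (minty_of_weakTendsto hmono hzM hv happrox hz)

end

theorem stmt_3_general {H : Type*} [NormedAddCommGroup H] [InnerProductSpace ℝ H]
    [CompleteSpace H]
    (C : Set H) (hCcl : IsClosed C) (hCcv : Convex ℝ C)
    (P : H → H) (hPmem : ∀ u : H, P u ∈ C)
    (hPchar : ∀ u : H, ∀ c ∈ C, ⟪u - P u, c - P u⟫ ≤ 0)
    (F : H → H) (hmono : ∀ u v : H, 0 ≤ ⟪F u - F v, u - v⟫)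
    (L : ℝ) (hLip : ∀ u v : H, ‖F u - F v‖ ≤ L * ‖u - v‖)
    (hSOL : ∃ p ∈ C, ∀ z ∈ C, 0 ≤ ⟪F p, z - p⟫)
    (ν γ : ℝ) (hν : ν ∈ Set.Ioo (0 : ℝ) 1) (hγ : γ ∈ Set.Ioo (0 : ℝ) 2)
    (e1 e2 : ℕ → H)
    (he2 : Summable (fun k => ‖e2 k‖))
    (x y : ℕ → H) (β : ℕ → ℝ) (d : ℕ → H) (ρ : ℕ → ℝ)
    (hβinf : ∃ b > (0 : ℝ), ∀ k, b ≤ β k)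
    (hy : ∀ k, y k = P (x k - β k • F (x k)) + e1 k)
    (hstep : ∀ k, β k * ‖F (x k) - F (y k - e1 k)‖ ≤ ν * ‖x k - y k + e1 k‖)
    (hd : ∀ k, d k = (x k - y k + e1 k) - β k • (F (x k) - F (y k - e1 k)))
    (hρ : ∀ k, ρ k = ⟪x k - y k + e1 k, d k⟫ / ‖d k‖ ^ 2)
    (hx : ∀ k, x (k + 1) = x k - (γ * ρ k) • d k + e2 k) :
    ∃ xhat, (xhat ∈ C ∧ ∀ z ∈ C, 0 ≤ ⟪F xhat, z - xhat⟫) ∧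
      ∀ u : H, Filter.Tendsto (fun k => ⟪x k, u⟫) Filter.atTop (nhds ⟪xhat, u⟫) := by
  obtain ⟨b, hb, hbβ⟩ := hβinf
  have hF : Continuous F :=
    (LipschitzWith.of_dist_le' fun u v => by simpa only [dist_eq_norm] using hLip u v).continuous
  set z : ℕ → H := fun k => y k - e1 k
  have hz : ∀ k, z k = P (x k - β k • F (x k)) := fun k => by simp [z, hy k]
  have hres : ∀ k, x k - y k + e1 k = x k - z k := fun k => by simp only [z]; abel
  have hzC : ∀ k, z k ∈ C := fun k => hz k ▸ hPmem _
  have hproj : ∀ k, ∀ c ∈ C, ⟪x k - β k • F (x k) - z k, c - z k⟫ ≤ 0 :=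
    fun k => hz k ▸ hPchar _
  have hstep' : ∀ k, β k * ‖F (x k) - F (z k)‖ ≤ ν * ‖x k - z k‖ := fun k => hres k ▸ hstep k
  set c := γ * (2 - γ) * ((1 - ν) / (1 + ν)) ^ 2
  have hc : 0 < c := mul_pos (mul_pos hγ.1 (by linarith [hγ.2]))
    (pow_pos (div_pos (by linarith [hν.2]) (by linarith [hν.1])) 2)
  have hdesc : ∀ q ∈ solVI C F, ∀ k,
      ‖x k - (γ * ρ k) • d k - q‖ ^ 2 + c * ‖x k - z k‖ ^ 2 ≤ ‖x k - q‖ ^ 2 := fun q hq k => by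
    rw [hρ k, hres]
    exact norm_pc_step_sq_add_le hmono (hb.trans_le (hbβ k)).le hν.1.le hν.2 hγ.1.le hγ.2.le
      (hzC k) (hproj k) hq (hstep' k) (by rw [hd k, hres])
  have hfejer : ∀ q ∈ solVI C F, (∃ r, Tendsto (fun k => ‖x k - q‖) atTop (𝓝 r)) ∧
      Tendsto (fun k => c * ‖x k - z k‖ ^ 2) atTop (𝓝 0) := fun q hq =>
    tendsto_of_sq_norm_sub_add_le he2 hx (fun k => by positivity) (hdesc q hq)
  obtain ⟨p, hp⟩ := hSOL
  obtain ⟨⟨r, hr⟩, hcw⟩ := hfejer p hp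
  have hw : Tendsto (fun k => ‖x k - z k‖) atTop (𝓝 0) := by
    simpa [← mul_assoc, inv_mul_cancel₀ hc.ne'] using (hcw.const_mul c⁻¹).sqrt
  obtain ⟨M, hM⟩ := exists_norm_le_of_tendsto_norm_sub hr
  exact exists_weakTendsto_of_tendsto_norm_sub ⟨p, hp⟩ (fun q hq => (hfejer q hq).1)
    fun U hU a ha => mem_solVI_of_weakTendsto_pc hCcv hCcl hmono hF hb hbβ hzC hproj hstep' hM
      (hw.mono_left hU) ha

theorem stmt_3 {H : Type*} [NormedAddCommGroup H] [InnerProductSpace ℝ H]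
    [CompleteSpace H]
    (C : Set H) (hCne : C.Nonempty) (hCcl : IsClosed C) (hCcv : Convex ℝ C)
    (P : H → H) (hPmem : ∀ u : H, P u ∈ C)
    (hPchar : ∀ u : H, ∀ c ∈ C, ⟪u - P u, c - P u⟫ ≤ 0)
    (F : H → H) (hmono : ∀ u v : H, 0 ≤ ⟪F u - F v, u - v⟫)
    (L : ℝ) (hL : 0 < L) (hLip : ∀ u v : H, ‖F u - F v‖ ≤ L * ‖u - v‖)
    (hSOL : ∃ p ∈ C, ∀ z ∈ C, 0 ≤ ⟪F p, z - p⟫)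
    (ν γ : ℝ) (hν : ν ∈ Set.Ioo (0 : ℝ) 1) (hγ : γ ∈ Set.Ioo (0 : ℝ) 2)
    (e1 e2 : ℕ → H)
    (he1 : Summable (fun k => ‖e1 k‖)) (he2 : Summable (fun k => ‖e2 k‖))
    (x y : ℕ → H) (β : ℕ → ℝ) (d : ℕ → H) (ρ : ℕ → ℝ)
    (hβpos : ∀ k, 0 < β k) (hβinf : ∃ b > (0 : ℝ), ∀ k, b ≤ β k)
    (hy : ∀ k, y k = P (x k - β k • F (x k)) + e1 k)
    (hstep : ∀ k, β k * ‖F (x k) - F (y k - e1 k)‖ ≤ ν * ‖x k - y k + e1 k‖)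
    (hd : ∀ k, d k = (x k - y k + e1 k) - β k • (F (x k) - F (y k - e1 k)))
    (hdne : ∀ k, d k ≠ 0)
    (hρ : ∀ k, ρ k = ⟪x k - y k + e1 k, d k⟫ / ‖d k‖ ^ 2)
    (hx : ∀ k, x (k + 1) = x k - (γ * ρ k) • d k + e2 k) :
    ∃ xhat, (xhat ∈ C ∧ ∀ z ∈ C, 0 ≤ ⟪F xhat, z - xhat⟫) ∧
      ∀ u : H, Filter.Tendsto (fun k => ⟪x k, u⟫) Filter.atTop (nhds ⟪xhat, u⟫) :=
  stmt_3_general C hCcl hCcv P hPmem hPchar F hmono L hLip hSOL ν γ hν hγ e1 e2 he2 x y β d ρ hβinf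
    hy hstep hd hρ hx
end

section
/- Let ν ∈ (0,1) and γ ∈ (0,2), and let {x^k}, {y^k}, {β_k}, {e1^k}, {e2^k} be generated by the PC-algorithm I with outer perturbations, i.e., for every k ≥ 0: β_k > 0; y^k = P_C(x^k − β_k F(x^k)) + e1^k; β_k‖F(x^k) − F(y^k − e1^k)‖ ≤ ν‖x^k − y^k + e1^k‖; d^k := (x^k − y^k + e1^k) − β_k(F(x^k) − F(y^k − e1^k)) ≠ 0; ρ_k := ⟨x^k − y^k + e1^k, d^k⟩ / ‖d^k‖²; x^{k+1} = x^k − γ ρ_k d^k + e2^k. Then for every k ≥ 0 and every x ∈ C: ⟨x − y^k + e1^k, γ ρ_k β_k F(y^k − e1^k)⟩ + (1/2)(‖x − x^k‖² − ‖x − x^{k+1} + e2^k‖²) ≥ (1/2) γ(2 − γ) ρ_k² ‖d^k‖². -/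
open RealInnerProductSpace

theorem stmt_4 {H : Type*} [NormedAddCommGroup H] [InnerProductSpace ℝ H]
    [CompleteSpace H]
    (C : Set H) (hCne : C.Nonempty) (hCcl : IsClosed C) (hCcv : Convex ℝ C)
    (P : H → H) (hPmem : ∀ u : H, P u ∈ C)
    (hPchar : ∀ u : H, ∀ c ∈ C, ⟪u - P u, c - P u⟫ ≤ 0)
    (F : H → H) (hmono : ∀ u v : H, 0 ≤ ⟪F u - F v, u - v⟫)
    (L : ℝ) (hL : 0 < L) (hLip : ∀ u v : H, ‖F u - F v‖ ≤ L * ‖u - v‖)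
    (ν γ : ℝ) (hν : ν ∈ Set.Ioo (0 : ℝ) 1) (hγ : γ ∈ Set.Ioo (0 : ℝ) 2)
    (e1 e2 : ℕ → H)
    (x y : ℕ → H) (β : ℕ → ℝ) (d : ℕ → H) (ρ : ℕ → ℝ)
    (hβpos : ∀ k, 0 < β k)
    (hy : ∀ k, y k = P (x k - β k • F (x k)) + e1 k)
    (hstep : ∀ k, β k * ‖F (x k) - F (y k - e1 k)‖ ≤ ν * ‖x k - y k + e1 k‖)
    (hd : ∀ k, d k = (x k - y k + e1 k) - β k • (F (x k) - F (y k - e1 k)))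
    (hdne : ∀ k, d k ≠ 0)
    (hρ : ∀ k, ρ k = ⟪x k - y k + e1 k, d k⟫ / ‖d k‖ ^ 2)
    (hx : ∀ k, x (k + 1) = x k - (γ * ρ k) • d k + e2 k) :
    ∀ k : ℕ, ∀ z ∈ C,
      (1 / 2) * γ * (2 - γ) * ρ k ^ 2 * ‖d k‖ ^ 2 ≤
        ⟪z - y k + e1 k, (γ * ρ k * β k) • F (y k - e1 k)⟫ +
          (1 / 2) * (‖z - x k‖ ^ 2 - ‖z - x (k + 1) + e2 k‖ ^ 2) := by
  intro k z hz
  set w : H := y k - e1 k with hw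
  have hPw : P (x k - β k • F (x k)) = w := by
    rw [hw, hy]; abel
  have hxw : x k - y k + e1 k = x k - w := by rw [hw]; abel
  have hzw : z - y k + e1 k = z - w := by rw [hw]; abel
  have hdpos : (0:ℝ) < ‖d k‖ ^ 2 :=
    pow_pos (norm_pos_iff.mpr (hdne k)) 2
  -- projection characterization
  have hproj : ⟪(x k - β k • F (x k)) - w, z - w⟫ ≤ 0 := by
    rw [← hPw]; exact hPchar _ z hz
  -- key inequality
  have hdw : d k = ((x k - β k • F (x k)) - w) + β k • F w := by
    rw [hd, hxw]; module
  have hkey : ⟪z - w, d k⟫ ≤ β k * ⟪z - w, F w⟫ := by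
    rw [hdw, inner_add_right, real_inner_smul_right]
    have h := hproj
    rw [real_inner_comm] at h
    linarith
  -- ρ ≥ 0
  have hexp : ⟪x k - w, d k⟫ = ‖x k - w‖ ^ 2 - β k * ⟪x k - w, F (x k) - F w⟫ := by
    rw [hd, hxw, inner_sub_right, real_inner_smul_right,
      real_inner_self_eq_norm_sq]
  have hcs : ⟪x k - w, F (x k) - F w⟫ ≤ ‖x k - w‖ * ‖F (x k) - F w‖ :=
    real_inner_le_norm _ _
  have hst := hstep k
  rw [hxw] at hst
  have hnum : 0 ≤ ⟪x k - w, d k⟫ := by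
    nlinarith [norm_nonneg (x k - w), norm_nonneg (F (x k) - F w), hν.1, hν.2,
      hβpos k, mul_le_mul_of_nonneg_left hcs (le_of_lt (hβpos k))]
  have hρnn : 0 ≤ ρ k := by
    rw [hρ, hxw]; positivity
  have hρd : ρ k * ‖d k‖ ^ 2 = ⟪x k - w, d k⟫ := by
    rw [hρ, hxw, div_mul_cancel₀]
    exact ne_of_gt hdpos
  -- expand the norm square
  have hexp2 : ‖z - x (k + 1) + e2 k‖ ^ 2 =
      ‖z - x k‖ ^ 2 + 2 * (γ * ρ k) * ⟪z - x k, d k⟫ + (γ * ρ k) ^ 2 * ‖d k‖ ^ 2 := by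
    have h1 : z - x (k + 1) + e2 k = (z - x k) + (γ * ρ k) • d k := by
      rw [hx]; abel
    rw [h1, norm_add_sq_real, real_inner_smul_right, norm_smul]
    have : ‖γ * ρ k‖ = γ * ρ k := by
      rw [Real.norm_eq_abs, abs_of_nonneg (mul_nonneg (le_of_lt hγ.1) hρnn)]
    rw [this]; ring
  have hsplit : ⟪z - w, d k⟫ = ⟪z - x k, d k⟫ + ⟪x k - w, d k⟫ := by
    rw [← inner_add_left]
    congr 1
    abel
  have h1 : γ * ρ k * ⟪z - w, d k⟫ =
      γ * ρ k * ⟪z - x k, d k⟫ + γ * ρ k * ⟪x k - w, d k⟫ := by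
    rw [hsplit]; ring
  have h2 : γ * ρ k * (ρ k * ‖d k‖ ^ 2) = γ * ρ k * ⟪x k - w, d k⟫ := by
    rw [hρd]
  have h3 : 0 ≤ γ * ρ k * (β k * ⟪z - w, F w⟫ - ⟪z - w, d k⟫) :=
    mul_nonneg (mul_nonneg (le_of_lt hγ.1) hρnn) (sub_nonneg.2 hkey)
  rw [hzw, real_inner_smul_right, hexp2]
  nlinarith [h1, h2, h3]
end

section
/- (O(1/t) rate of the PC-algorithm I with outer perturbations.) Let ν ∈ (0,1), γ ∈ (0,2), and let {x^k}, {y^k}, {β_k}, {e1^k}, {e2^k}, {ρ_k}, {d^k} be generated by the PC-algorithm I with outer perturbations: for every k ≥ 0, β_k > 0; y^k = P_C(x^k − β_k F(x^k)) + e1^k; β_k‖F(x^k) − F(y^k − e1^k)‖ ≤ ν‖x^k − y^k + e1^k‖; d^k := (x^k − y^k + e1^k) − β_k(F(x^k) − F(y^k − e1^k)) ≠ 0; ρ_k := ⟨x^k − y^k + e1^k, d^k⟩/‖d^k‖²; x^{k+1} = x^k − γ ρ_k d^k + e2^k; and assume Σ_{k=0}^∞ ‖e2^k‖ < +∞ and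 {x^k} is bounded. For an integer t > 0 set Υ_t := Σ_{k=0}^t ρ_k β_k (assumed positive) and ŷ_t := (1/Υ_t) Σ_{k=0}^t ρ_k β_k (y^k − e1^k). Then for every x ∈ C, ⟨F(x), ŷ_t − x⟩ ≤ (1/(2γΥ_t))·(‖x − x^0‖² + 2M(x)), where M(x) := (sup_{k} ‖x^{k+1} − x‖)·Σ_{k=0}^∞ ‖e2^k‖. -/
/-!
Write `w k = y k - e1 k = P_C(x k - β k F(x k))`. The projection inequality at `z ∈ C` together
with monotonicity of `F` gives `⟪x k - z, d k⟫ ≥ ρ k ‖d k‖² + β k ⟪F z, w k - z⟫`, so the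
unperturbed step `x k - γ ρ k d k` moves towards `z` by at least `2 γ ρ k β k ⟪F z, w k - z⟫`
in squared distance (since `γ ≤ 2`). The outer perturbation `e2 k` costs at most
`2 ‖e2 k‖ sup_j ‖x (j + 1) - z‖`. Summing over `k ≤ t` telescopes, and the left-hand side is
`2 γ Υ_t ⟪F z, ŷ_t - z⟫`.
-/

open RealInnerProductSpace

theorem sum_range_le_of_le_sub_add {f a ε : ℕ → ℝ} {c : ℝ} (n : ℕ) (han : 0 ≤ a n) (hc : 0 ≤ c)
    (hε0 : ∀ k, 0 ≤ ε k) (hε : Summable ε) (h : ∀ k, f k ≤ a k - a (k + 1) + c * ε k) :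
    ∑ k ∈ Finset.range n, f k ≤ a 0 + c * ∑' k, ε k := by
  have hsum : ∑ k ∈ Finset.range n, (a k - a (k + 1) + c * ε k) =
      a 0 - a n + c * ∑ k ∈ Finset.range n, ε k := by
    rw [Finset.sum_add_distrib, Finset.sum_range_sub', Finset.mul_sum]
  have htail := mul_le_mul_of_nonneg_left (hε.sum_le_tsum (Finset.range n) fun k _ => hε0 k) hc
  linarith [Finset.sum_le_sum fun k (_ : k ∈ Finset.range n) => h k]

section

variable {H : Type*} [NormedAddCommGroup H] [InnerProductSpace ℝ H]

theorem inner_sub_add_gap_le_of_proj {F : H → H} (hmono : ∀ u v : H, 0 ≤ ⟪F u - F v, u - v⟫)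
    {x w z d : H} {β : ℝ} (hβ : 0 ≤ β) (hproj : ⟪(x - β • F x) - w, z - w⟫ ≤ 0)
    (hd : d = (x - w) - β • (F x - F w)) :
    ⟪x - w, d⟫ + β * ⟪F z, w - z⟫ ≤ ⟪x - z, d⟫ := by
  have hsplit : ⟪x - z, d⟫ = ⟪x - w, d⟫ + ⟪w - z, d⟫ := by
    rw [← inner_add_left, sub_add_sub_cancel]
  have hdecomp : d = ((x - β • F x) - w) + β • F w := by
    rw [hd, smul_sub]; abel
  have hwd : ⟪w - z, d⟫ = -⟪(x - β • F x) - w, z - w⟫ + β * ⟪F w, w - z⟫ := by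
    rw [hdecomp, inner_add_right, real_inner_smul_right, real_inner_comm (F w),
      ← neg_sub z w, inner_neg_left, real_inner_comm]
  have hFz : ⟪F z, w - z⟫ ≤ ⟪F w, w - z⟫ := by
    have := hmono w z
    rw [inner_sub_left] at this
    linarith
  nlinarith [mul_le_mul_of_nonneg_left hFz hβ]

theorem norm_sub_smul_sq_le {v d : H} {ρ γ c : ℝ} (hρ : 0 ≤ ρ) (hγ0 : 0 ≤ γ) (hγ2 : γ ≤ 2)
    (h : ρ * ‖d‖ ^ 2 + c ≤ ⟪v, d⟫) :
    ‖v - (γ * ρ) • d‖ ^ 2 ≤ ‖v‖ ^ 2 - 2 * γ * (ρ * c) := by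
  rw [norm_sub_sq_real, real_inner_smul_right, norm_smul, mul_pow, Real.norm_eq_abs, sq_abs]
  nlinarith [mul_le_mul_of_nonneg_left h (mul_nonneg hγ0 hρ),
    mul_nonneg (mul_nonneg (mul_nonneg hγ0 (sub_nonneg.2 hγ2)) (sq_nonneg ρ)) (sq_nonneg ‖d‖)]

theorem norm_add_sq_le_of_norm_add_le {u e : H} {S : ℝ} (hS : ‖u + e‖ ≤ S) :
    ‖u + e‖ ^ 2 ≤ ‖u‖ ^ 2 + 2 * S * ‖e‖ := by
  have hu : ‖u‖ ^ 2 = ‖u + e‖ ^ 2 - 2 * ⟪u + e, e⟫ + ‖e‖ ^ 2 := by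
    rw [← norm_sub_sq_real, add_sub_cancel_right]
  have hCS : ⟪u + e, e⟫ ≤ S * ‖e‖ :=
    (real_inner_le_norm _ _).trans (mul_le_mul_of_nonneg_right hS (norm_nonneg e))
  nlinarith [sq_nonneg ‖e‖]

theorem inner_sub_smul_nonneg {s g : H} {β ν : ℝ} (hβ : 0 ≤ β) (hν : ν ≤ 1)
    (h : β * ‖g‖ ≤ ν * ‖s‖) : 0 ≤ ⟪s, s - β • g⟫ := by
  rw [inner_sub_right, real_inner_smul_right, real_inner_self_eq_norm_sq]
  nlinarith [mul_le_mul_of_nonneg_left (real_inner_le_norm s g) hβ,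
    mul_le_mul_of_nonneg_left h (norm_nonneg s), sq_nonneg ‖s‖]

theorem pc_step_estimate {F : H → H} (hmono : ∀ u v : H, 0 ≤ ⟪F u - F v, u - v⟫)
    {x x' w z d e : H} {β ρ γ S : ℝ} (hβ : 0 ≤ β) (hρ0 : 0 ≤ ρ) (hγ0 : 0 ≤ γ) (hγ2 : γ ≤ 2)
    (hproj : ⟪(x - β • F x) - w, z - w⟫ ≤ 0) (hd : d = (x - w) - β • (F x - F w))
    (hρ : ρ * ‖d‖ ^ 2 = ⟪x - w, d⟫) (hx' : x' = x - (γ * ρ) • d + e) (hS : ‖x' - z‖ ≤ S) :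
    2 * γ * (ρ * β * ⟪F z, w - z⟫) ≤ ‖x - z‖ ^ 2 - ‖x' - z‖ ^ 2 + 2 * S * ‖e‖ := by
  have hdir := inner_sub_add_gap_le_of_proj hmono hβ hproj hd
  rw [← hρ] at hdir
  have hcontract := norm_sub_smul_sq_le hρ0 hγ0 hγ2 hdir
  have hx'z : x' - z = (x - z - (γ * ρ) • d) + e := by rw [hx']; abel
  have hperturb := norm_add_sq_le_of_norm_add_le (hx'z ▸ hS)
  rw [← hx'z] at hperturb
  linarith

theorem inner_inv_smul_sum_sub {ι : Type*} (s : Finset ι) (l : ι → ℝ) (w : ι → H) (a z : H)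
    (hl : ∑ i ∈ s, l i ≠ 0) :
    ⟪a, (∑ i ∈ s, l i)⁻¹ • ∑ i ∈ s, l i • w i - z⟫ =
      (∑ i ∈ s, l i)⁻¹ * ∑ i ∈ s, l i * ⟪a, w i - z⟫ := by
  have hcenter : (∑ i ∈ s, l i)⁻¹ • ∑ i ∈ s, l i • w i - z =
      (∑ i ∈ s, l i)⁻¹ • ∑ i ∈ s, l i • (w i - z) := by
    simp only [smul_sub, Finset.sum_sub_distrib, ← Finset.sum_smul, smul_smul,
      inv_mul_cancel₀ hl, one_smul]
  rw [hcenter, real_inner_smul_right, inner_sum]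
  simp only [real_inner_smul_right]

end

theorem stmt_5_general {H : Type*} [NormedAddCommGroup H] [InnerProductSpace ℝ H]
    (C : Set H) (P : H → H)
    (hPchar : ∀ u : H, ∀ c ∈ C, ⟪u - P u, c - P u⟫ ≤ 0)
    (F : H → H) (hmono : ∀ u v : H, 0 ≤ ⟪F u - F v, u - v⟫)
    (ν γ : ℝ) (hν : ν ∈ Set.Ioo (0 : ℝ) 1) (hγ : γ ∈ Set.Ioo (0 : ℝ) 2)
    (e1 e2 : ℕ → H) (he2 : Summable (fun k => ‖e2 k‖))
    (x y : ℕ → H) (β : ℕ → ℝ) (d : ℕ → H) (ρ : ℕ → ℝ)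
    (hβpos : ∀ k, 0 < β k)
    (hy : ∀ k, y k = P (x k - β k • F (x k)) + e1 k)
    (hstep : ∀ k, β k * ‖F (x k) - F (y k - e1 k)‖ ≤ ν * ‖x k - y k + e1 k‖)
    (hd : ∀ k, d k = (x k - y k + e1 k) - β k • (F (x k) - F (y k - e1 k)))
    (hρ : ∀ k, ρ k = ⟪x k - y k + e1 k, d k⟫ / ‖d k‖ ^ 2)
    (hx : ∀ k, x (k + 1) = x k - (γ * ρ k) • d k + e2 k)
    (hbdd : ∃ R : ℝ, ∀ k, ‖x k‖ ≤ R)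
    (t : ℕ) (hΥ : 0 < ∑ k ∈ Finset.range (t + 1), ρ k * β k) :
    ∀ z ∈ C,
      ⟪F z, ((∑ k ∈ Finset.range (t + 1), ρ k * β k)⁻¹ •
          ∑ k ∈ Finset.range (t + 1), (ρ k * β k) • (y k - e1 k)) - z⟫ ≤
        (1 / (2 * γ * ∑ k ∈ Finset.range (t + 1), ρ k * β k)) *
          (‖z - x 0‖ ^ 2 +
            2 * ((⨆ k : ℕ, ‖x (k + 1) - z‖) * ∑' k : ℕ, ‖e2 k‖)) := by
  intro z hz
  obtain ⟨R, hR⟩ := hbdd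
  simp only [sub_add] at hstep hd hρ
  set S := ⨆ k : ℕ, ‖x (k + 1) - z‖
  have hSle : ∀ k, ‖x (k + 1) - z‖ ≤ S := le_ciSup ⟨R + ‖z‖, by
    rintro _ ⟨k, rfl⟩
    exact (norm_sub_le _ _).trans (by linarith [hR (k + 1)])⟩
  have hρ0 (k : ℕ) : 0 ≤ ρ k := by
    rw [hρ k, hd k]
    exact div_nonneg (inner_sub_smul_nonneg (hβpos k).le hν.2.le (hstep k)) (sq_nonneg _)
  -- Where `d k = 0` both sides vanish, since `ρ k = 0 / 0 = 0`.
  have hρd (k : ℕ) : ρ k * ‖d k‖ ^ 2 = ⟪x k - (y k - e1 k), d k⟫ := by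
    rw [hρ k, div_mul_cancel_of_imp]
    intro h
    rw [norm_eq_zero.1 (pow_eq_zero_iff two_ne_zero |>.1 h), inner_zero_right]
  have hdescent (k : ℕ) := pc_step_estimate hmono (hβpos k).le (hρ0 k) hγ.1.le hγ.2.le
    (by rw [hy k, add_sub_cancel_right]; exact hPchar _ z hz) (hd k) (hρd k) (hx k) (hSle k)
  have hsum := sum_range_le_of_le_sub_add (t + 1) (sq_nonneg _)
    (by linarith [(norm_nonneg _).trans (hSle 0)]) (fun k => norm_nonneg (e2 k)) he2 hdescent
  rw [← Finset.mul_sum, norm_sub_rev] at hsum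
  rw [inner_inv_smul_sum_sub _ _ _ _ _ hΥ.ne']
  set Υ := ∑ k ∈ Finset.range (t + 1), ρ k * β k
  have hγ0 := hγ.1
  calc Υ⁻¹ * ∑ k ∈ Finset.range (t + 1), ρ k * β k * ⟪F z, y k - e1 k - z⟫
      = 1 / (2 * γ * Υ) * (2 * γ * ∑ k ∈ Finset.range (t + 1),
          ρ k * β k * ⟪F z, y k - e1 k - z⟫) := by field_simp
    _ ≤ _ := mul_le_mul_of_nonneg_left (by linarith) (by positivity)

theorem stmt_5 {H : Type*} [NormedAddCommGroup H] [InnerProductSpace ℝ H]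
    [CompleteSpace H]
    (C : Set H) (hCne : C.Nonempty) (hCcl : IsClosed C) (hCcv : Convex ℝ C)
    (P : H → H) (hPmem : ∀ u : H, P u ∈ C)
    (hPchar : ∀ u : H, ∀ c ∈ C, ⟪u - P u, c - P u⟫ ≤ 0)
    (F : H → H) (hmono : ∀ u v : H, 0 ≤ ⟪F u - F v, u - v⟫)
    (L : ℝ) (hL : 0 < L) (hLip : ∀ u v : H, ‖F u - F v‖ ≤ L * ‖u - v‖)
    (ν γ : ℝ) (hν : ν ∈ Set.Ioo (0 : ℝ) 1) (hγ : γ ∈ Set.Ioo (0 : ℝ) 2)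
    (e1 e2 : ℕ → H) (he2 : Summable (fun k => ‖e2 k‖))
    (x y : ℕ → H) (β : ℕ → ℝ) (d : ℕ → H) (ρ : ℕ → ℝ)
    (hβpos : ∀ k, 0 < β k)
    (hy : ∀ k, y k = P (x k - β k • F (x k)) + e1 k)
    (hstep : ∀ k, β k * ‖F (x k) - F (y k - e1 k)‖ ≤ ν * ‖x k - y k + e1 k‖)
    (hd : ∀ k, d k = (x k - y k + e1 k) - β k • (F (x k) - F (y k - e1 k)))
    (hdne : ∀ k, d k ≠ 0)
    (hρ : ∀ k, ρ k = ⟪x k - y k + e1 k, d k⟫ / ‖d k‖ ^ 2)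
    (hx : ∀ k, x (k + 1) = x k - (γ * ρ k) • d k + e2 k)
    (hbdd : ∃ R : ℝ, ∀ k, ‖x k‖ ≤ R)
    (t : ℕ) (ht : 0 < t)
    (hΥ : 0 < ∑ k ∈ Finset.range (t + 1), ρ k * β k) :
    ∀ z ∈ C,
      ⟪F z, ((∑ k ∈ Finset.range (t + 1), ρ k * β k)⁻¹ •
          ∑ k ∈ Finset.range (t + 1), (ρ k * β k) • (y k - e1 k)) - z⟫ ≤
        (1 / (2 * γ * ∑ k ∈ Finset.range (t + 1), ρ k * β k)) *
          (‖z - x 0‖ ^ 2 +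
            2 * ((⨆ k : ℕ, ‖x (k + 1) - z‖) * ∑' k : ℕ, ‖e2 k‖)) :=
  stmt_5_general C P hPchar F hmono ν γ hν hγ e1 e2 he2 x y β d ρ hβpos hy hstep hd hρ hx hbdd t hΥ
end

section
/- Let ν ∈ (0,1) and μ ∈ [0, 1 − ν). Let x, y, e ∈ H and β > 0 satisfy β‖F(x) − F(y)‖ ≤ ν‖x − y‖ and ‖e‖ ≤ μ‖x − y‖. Define d := (x − y) − β(F(x) − F(y)) + e. Then ⟨x − y, d⟩ ≥ (1 − ν − μ)‖x − y‖², ‖d‖² ≤ (1 + ν² + μ² + 2μ + 2νμ)‖x − y‖², and consequently (1 + ν² + μ² + 2μ + 2νμ)·⟨x − y, d⟩ ≥ (1 − ν − μ)·‖d‖² (i.e., if d ≠ 0 then ⟨x − y, d⟩/‖d‖² ≥ (1 − ν − μ)/(1 + ν² + μ² + 2μ + 2νμ)). -/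
open RealInnerProductSpace

set_option maxHeartbeats 1000000

theorem stmt_6 {H : Type*} [NormedAddCommGroup H] [InnerProductSpace ℝ H]
    [CompleteSpace H]
    (F : H → H) (hmono : ∀ u v : H, 0 ≤ ⟪F u - F v, u - v⟫)
    (ν μ : ℝ) (hν : ν ∈ Set.Ioo (0 : ℝ) 1) (hμ : μ ∈ Set.Ico (0 : ℝ) (1 - ν))
    (x y e : H) (β : ℝ) (hβ : 0 < β)
    (hstep : β * ‖F x - F y‖ ≤ ν * ‖x - y‖)
    (he : ‖e‖ ≤ μ * ‖x - y‖) :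
    (1 - ν - μ) * ‖x - y‖ ^ 2 ≤ ⟪x - y, (x - y) - β • (F x - F y) + e⟫ ∧
    ‖(x - y) - β • (F x - F y) + e‖ ^ 2 ≤
        (1 + ν ^ 2 + μ ^ 2 + 2 * μ + 2 * ν * μ) * ‖x - y‖ ^ 2 ∧
    (1 - ν - μ) * ‖(x - y) - β • (F x - F y) + e‖ ^ 2 ≤
        (1 + ν ^ 2 + μ ^ 2 + 2 * μ + 2 * ν * μ) *
          ⟪x - y, (x - y) - β • (F x - F y) + e⟫ := by
  set w := x - y with hw
  set f := F x - F y with hf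
  have hwn : (0:ℝ) ≤ ‖w‖ := norm_nonneg _
  have hfn : (0:ℝ) ≤ ‖f‖ := norm_nonneg _
  have hfm : 0 ≤ ⟪w, f⟫ := by rw [real_inner_comm]; exact hmono x y
  have hinner : ⟪w, w - β • f + e⟫ = ‖w‖ ^ 2 - β * ⟪w, f⟫ + ⟪w, e⟫ := by
    rw [inner_add_right, inner_sub_right, real_inner_smul_right,
      real_inner_self_eq_norm_sq]
  have hcs0 := real_inner_le_norm w f
  have hcs1 : β * ⟪w, f⟫ ≤ ν * ‖w‖ ^ 2 := by nlinarith
  have hcs2 : |⟪w, e⟫| ≤ μ * ‖w‖ ^ 2 :=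
    le_trans (abs_real_inner_le_norm w e) (by nlinarith)
  have hcs2' := abs_le.mp hcs2
  have hA : (1 - ν - μ) * ‖w‖ ^ 2 ≤ ⟪w, w - β • f + e⟫ := by
    rw [hinner]; nlinarith
  have hnsq : ‖w - β • f‖ ^ 2 = ‖w‖ ^ 2 - 2 * (β * ⟪w, f⟫) + β ^ 2 * ‖f‖ ^ 2 := by
    rw [norm_sub_sq_real, real_inner_smul_right, norm_smul, Real.norm_eq_abs,
      abs_of_pos hβ]
    ring
  have hsq : β ^ 2 * ‖f‖ ^ 2 ≤ ν ^ 2 * ‖w‖ ^ 2 := by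
    nlinarith [mul_le_mul hstep hstep (mul_nonneg hβ.le hfn) (mul_nonneg hν.1.le hwn)]
  have hb1 : ‖w - β • f‖ ^ 2 ≤ (1 + ν ^ 2) * ‖w‖ ^ 2 := by
    rw [hnsq]; nlinarith
  have hb2 : ‖w - β • f‖ ≤ (1 + ν) * ‖w‖ := by
    have h' : ‖w - β • f‖ ^ 2 ≤ ((1 + ν) * ‖w‖) ^ 2 := by
      nlinarith [sq_nonneg ‖w‖, hν.1.le, mul_nonneg hν.1.le (sq_nonneg ‖w‖)]
    exact (pow_le_pow_iff_left₀ (norm_nonneg _) (mul_nonneg (by linarith [hν.1]) hwn) two_ne_zero).mp h'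
  have htri := norm_add_le (w - β • f) e
  have hdsq : ‖w - β • f + e‖ ^ 2 ≤ (1 + ν ^ 2 + μ ^ 2 + 2 * μ + 2 * ν * μ) * ‖w‖ ^ 2 := by
    nlinarith [norm_nonneg (w - β • f + e), norm_nonneg e, norm_nonneg (w - β • f),
      hν.1.le, hμ.1]
  refine ⟨hA, hdsq, ?_⟩
  have hc : 0 < 1 - ν - μ := by have := hμ.2; linarith
  have hApos : 0 < 1 + ν ^ 2 + μ ^ 2 + 2 * μ + 2 * ν * μ := by nlinarith [hν.1, hμ.1]
  calc (1 - ν - μ) * ‖w - β • f + e‖ ^ 2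
      ≤ (1 - ν - μ) * ((1 + ν ^ 2 + μ ^ 2 + 2 * μ + 2 * ν * μ) * ‖w‖ ^ 2) :=
        mul_le_mul_of_nonneg_left hdsq hc.le
    _ = (1 + ν ^ 2 + μ ^ 2 + 2 * μ + 2 * ν * μ) * ((1 - ν - μ) * ‖w‖ ^ 2) := by ring
    _ ≤ (1 + ν ^ 2 + μ ^ 2 + 2 * μ + 2 * ν * μ) * ⟪w, w - β • f + e⟫ :=
        mul_le_mul_of_nonneg_left hA hApos.le
end

section
/- Let ν ∈ (0,1), μ ∈ [0, 1 − ν), γ ∈ (0,2), and let {x^k}, {y^k}, {β_k}, {e1^k}, {e2^k} be generated by the PC-algorithm II with outer perturbations: for every k ≥ 0, β_k > 0; y^k = P_C(x^k − β_k F(x^k) + e1^k); β_k‖F(x^k) − F(y^k)‖ ≤ ν‖x^k − y^k‖; ‖e1^k‖ ≤ μ‖x^k − y^k‖; d^k := (x^k − y^k) − β_k(F(x^k) − F(y^k)) + e1^k ≠ 0; ρ_k := ⟨x^k − y^k, d^k⟩/‖d^k‖²; x^{k+1} = P_C(x^k − γ ρ_k β_k F(y^k) + e2^k). Then for every k ≥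 0 and every x ∈ C: ⟨x − y^k, γ ρ_k β_k F(y^k)⟩ + (1/2)(‖x − x^k‖² − ‖x − x^{k+1}‖²) ≥ (1/2) γ(2 − γ) ρ_k² ‖d^k‖² + ⟨x − x^{k+1}, e2^k⟩. -/
/-!
Write `p = x^{k+1}`, `w = y^k`, `s = γ ρ_k` and let `z ∈ C`. The projection inequality defining
`y^k`, tested at `p`, gives `β_k ⟨F(y^k), p - w⟩ ≥ ⟨d^k, p - w⟩`, and `⟨x^k - w, d^k⟩ = ρ_k ‖d^k‖²`.
The projection inequality defining `p`, tested at `z`, becomes by polarization the telescoping term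
`½(‖z - x^k‖² - ‖z - p‖²)`. The leftover `s ⟨d^k, p - x^k⟩ + ½‖p - x^k‖²` is at least
`-½ s² ‖d^k‖²`, and `s ρ_k - ½ s² = ½ γ (2 - γ) ρ_k²`. Multiplying by `s` needs `ρ_k ≥ 0`, which
holds because `d^k` differs from `x^k - y^k` by at most `(ν + μ)‖x^k - y^k‖ ≤ ‖x^k - y^k‖`.
-/

open RealInnerProductSpace

section

variable {E : Type*} [NormedAddCommGroup E] [InnerProductSpace ℝ E]

theorem real_inner_add_nonneg_of_norm_le {w v : E} (h : ‖v‖ ≤ ‖w‖) : 0 ≤ ⟪w, w + v⟫ := by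
  have hcs : -(‖w‖ * ‖v‖) ≤ ⟪w, v⟫ := (abs_le.mp (abs_real_inner_le_norm w v)).1
  rw [inner_add_right, real_inner_self_eq_norm_sq]
  nlinarith [norm_nonneg w]

theorem real_inner_sub_smul_add_nonneg {w g e : E} {β ν μ : ℝ} (hβ : 0 ≤ β)
    (hνμ : ν + μ ≤ 1) (hg : β * ‖g‖ ≤ ν * ‖w‖) (he : ‖e‖ ≤ μ * ‖w‖) :
    0 ≤ ⟪w, w - β • g + e⟫ := by
  have hv : ‖e - β • g‖ ≤ ‖w‖ :=
    calc ‖e - β • g‖ ≤ ‖e‖ + β * ‖g‖ := by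
          simpa [norm_smul, abs_of_nonneg hβ] using norm_sub_le e (β • g)
      _ ≤ (μ + ν) * ‖w‖ := by linarith
      _ ≤ ‖w‖ := by nlinarith [norm_nonneg w]
  simpa only [sub_add_eq_add_sub, add_sub_assoc] using real_inner_add_nonneg_of_norm_le hv

theorem real_inner_div_norm_sq_mul_norm_sq (a d : E) :
    ⟪a, d⟫ / ‖d‖ ^ 2 * ‖d‖ ^ 2 = ⟪a, d⟫ :=
  div_mul_cancel_of_imp fun h ↦ by simp [norm_eq_zero.mp (pow_eq_zero_iff two_ne_zero |>.mp h)]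

theorem neg_half_norm_sq_le_inner_add_half_norm_sq (u v : E) :
    -(1 / 2 * ‖u‖ ^ 2) ≤ ⟪u, v⟫ + 1 / 2 * ‖v‖ ^ 2 := by
  nlinarith [norm_add_sq_real u v, sq_nonneg ‖u + v‖]

/-- The variational inequality of `p = P_C (a + v)` at `z ∈ C`, rewritten by polarization. -/
theorem inner_add_half_norm_sq_le_of_inner_sub_le_zero {a v p z : E}
    (h : ⟪a + v - p, z - p⟫ ≤ 0) :
    ⟪z - p, v⟫ + 1 / 2 * ‖p - a‖ ^ 2 ≤ 1 / 2 * (‖z - a‖ ^ 2 - ‖z - p‖ ^ 2) := by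
  have hpol : ‖z - a‖ ^ 2 = ‖z - p‖ ^ 2 + 2 * ⟪z - p, p - a⟫ + ‖p - a‖ ^ 2 := by
    rw [← norm_add_sq_real, sub_add_sub_cancel]
  rw [add_sub_right_comm, inner_add_left, real_inner_comm (z - p) v, ← neg_sub p a,
    inner_neg_left, real_inner_comm (z - p) (p - a)] at h
  linarith

theorem projection_step_inequality {a w p z d g e : E} {s β ρ : ℝ} (hs : 0 ≤ s)
    (hw : ⟪d - β • g, p - w⟫ ≤ 0) (hp : ⟪a + (e - (s * β) • g) - p, z - p⟫ ≤ 0)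
    (hρ : ⟪a - w, d⟫ = ρ * ‖d‖ ^ 2) :
    s * ρ * ‖d‖ ^ 2 - s ^ 2 / 2 * ‖d‖ ^ 2 + ⟪z - p, e⟫ ≤
      ⟪z - w, (s * β) • g⟫ + 1 / 2 * (‖z - a‖ ^ 2 - ‖z - p‖ ^ 2) := by
  have hvi := inner_add_half_norm_sq_le_of_inner_sub_le_zero hp
  have hdg : s * ⟪d, p - w⟫ ≤ s * β * ⟪g, p - w⟫ := by
    rw [inner_sub_left, real_inner_smul_left] at hw
    linarith [mul_nonpos_of_nonneg_of_nonpos hs hw]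
  have hdp : ⟪d, p - w⟫ = ⟪d, p - a⟫ + ρ * ‖d‖ ^ 2 := by
    rw [← hρ, real_inner_comm d (a - w), ← inner_add_right, sub_add_sub_cancel]
  have hyoung := neg_half_norm_sq_le_inner_add_half_norm_sq (s • d) (p - a)
  have hsplit : ⟪z - w, (s * β) • g⟫ = s * β * (⟪z - p, g⟫ + ⟪g, p - w⟫) := by
    rw [real_inner_smul_right, real_inner_comm g (z - w), real_inner_comm g (z - p),
      ← inner_add_right, sub_add_sub_cancel]
  rw [inner_sub_right, real_inner_smul_right] at hvi
  rw [norm_smul, real_inner_smul_left, Real.norm_eq_abs, mul_pow, sq_abs] at hyoung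
  rw [hsplit]
  linear_combination hvi + hdg + hyoung - s * hdp

end

theorem stmt_8_general {H : Type*} [NormedAddCommGroup H] [InnerProductSpace ℝ H]
    (C : Set H)
    (P : H → H) (hPmem : ∀ u : H, P u ∈ C)
    (hPchar : ∀ u : H, ∀ c ∈ C, ⟪u - P u, c - P u⟫ ≤ 0)
    (F : H → H)
    (ν μ γ : ℝ) (hμ : μ ∈ Set.Ico (0 : ℝ) (1 - ν))
    (hγ : γ ∈ Set.Ioo (0 : ℝ) 2)
    (e1 e2 : ℕ → H)
    (x y : ℕ → H) (β : ℕ → ℝ) (d : ℕ → H) (ρ : ℕ → ℝ)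
    (hβpos : ∀ k, 0 < β k)
    (hy : ∀ k, y k = P (x k - β k • F (x k) + e1 k))
    (hstep : ∀ k, β k * ‖F (x k) - F (y k)‖ ≤ ν * ‖x k - y k‖)
    (he1b : ∀ k, ‖e1 k‖ ≤ μ * ‖x k - y k‖)
    (hd : ∀ k, d k = (x k - y k) - β k • (F (x k) - F (y k)) + e1 k)
    (hρ : ∀ k, ρ k = ⟪x k - y k, d k⟫ / ‖d k‖ ^ 2)
    (hx : ∀ k, x (k + 1) = P (x k - (γ * ρ k * β k) • F (y k) + e2 k)) :
    ∀ k : ℕ, ∀ z ∈ C,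
      (1 / 2) * γ * (2 - γ) * ρ k ^ 2 * ‖d k‖ ^ 2 + ⟪z - x (k + 1), e2 k⟫ ≤
        ⟪z - y k, (γ * ρ k * β k) • F (y k)⟫ +
          (1 / 2) * (‖z - x k‖ ^ 2 - ‖z - x (k + 1)‖ ^ 2) := by
  intro k z hz
  have hρ_nonneg : 0 ≤ ρ k := by
    rw [hρ k, hd k]
    refine div_nonneg (real_inner_sub_smul_add_nonneg (hβpos k).le ?_ (hstep k) (he1b k))
      (sq_nonneg _)
    linarith [hμ.2]
  have hρd : ⟪x k - y k, d k⟫ = ρ k * ‖d k‖ ^ 2 := by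
    rw [hρ k, real_inner_div_norm_sq_mul_norm_sq]
  have hw : ⟪d k - β k • F (y k), x (k + 1) - y k⟫ ≤ 0 := by
    have h := hPchar (x k - β k • F (x k) + e1 k) (x (k + 1)) (hx k ▸ hPmem _)
    rwa [← hy k, show x k - β k • F (x k) + e1 k - y k = d k - β k • F (y k) by
      rw [hd k]; module] at h
  have hp := hPchar (x k - (γ * ρ k * β k) • F (y k) + e2 k) z hz
  rw [← hx k, sub_add_eq_add_sub, add_sub_assoc] at hp
  linear_combination
    projection_step_inequality (mul_nonneg hγ.1.le hρ_nonneg) hw hp hρd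

theorem stmt_8 {H : Type*} [NormedAddCommGroup H] [InnerProductSpace ℝ H]
    [CompleteSpace H]
    (C : Set H) (hCne : C.Nonempty) (hCcl : IsClosed C) (hCcv : Convex ℝ C)
    (P : H → H) (hPmem : ∀ u : H, P u ∈ C)
    (hPchar : ∀ u : H, ∀ c ∈ C, ⟪u - P u, c - P u⟫ ≤ 0)
    (F : H → H) (hmono : ∀ u v : H, 0 ≤ ⟪F u - F v, u - v⟫)
    (L : ℝ) (hL : 0 < L) (hLip : ∀ u v : H, ‖F u - F v‖ ≤ L * ‖u - v‖)
    (ν μ γ : ℝ) (hν : ν ∈ Set.Ioo (0 : ℝ) 1) (hμ : μ ∈ Set.Ico (0 : ℝ) (1 - ν))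
    (hγ : γ ∈ Set.Ioo (0 : ℝ) 2)
    (e1 e2 : ℕ → H)
    (x y : ℕ → H) (β : ℕ → ℝ) (d : ℕ → H) (ρ : ℕ → ℝ)
    (hβpos : ∀ k, 0 < β k)
    (hy : ∀ k, y k = P (x k - β k • F (x k) + e1 k))
    (hstep : ∀ k, β k * ‖F (x k) - F (y k)‖ ≤ ν * ‖x k - y k‖)
    (he1b : ∀ k, ‖e1 k‖ ≤ μ * ‖x k - y k‖)
    (hd : ∀ k, d k = (x k - y k) - β k • (F (x k) - F (y k)) + e1 k)
    (hdne : ∀ k, d k ≠ 0)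
    (hρ : ∀ k, ρ k = ⟪x k - y k, d k⟫ / ‖d k‖ ^ 2)
    (hx : ∀ k, x (k + 1) = P (x k - (γ * ρ k * β k) • F (y k) + e2 k)) :
    ∀ k : ℕ, ∀ z ∈ C,
      (1 / 2) * γ * (2 - γ) * ρ k ^ 2 * ‖d k‖ ^ 2 + ⟪z - x (k + 1), e2 k⟫ ≤
        ⟪z - y k, (γ * ρ k * β k) • F (y k)⟫ +
          (1 / 2) * (‖z - x k‖ ^ 2 - ‖z - x (k + 1)‖ ^ 2) :=
  stmt_8_general C P hPmem hPchar F ν μ γ hμ hγ e1 e2 x y β d ρ hβpos hy hstep he1b hd hρ hx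
end

section
/- (O(1/t) rate of the PC-algorithm II with outer perturbations.) Let ν ∈ (0,1), μ ∈ [0, 1 − ν), γ ∈ (0,2), and let {x^k}, {y^k}, {β_k}, {e1^k}, {e2^k}, {ρ_k}, {d^k} be generated by the PC-algorithm II with outer perturbations: for every k ≥ 0, β_k > 0; y^k = P_C(x^k − β_k F(x^k) + e1^k); β_k‖F(x^k) − F(y^k)‖ ≤ ν‖x^k − y^k‖; ‖e1^k‖ ≤ μ‖x^k − y^k‖; d^k := (x^k − y^k) − β_k(F(x^k) − F(y^k)) + e1^k ≠ 0; ρ_k := ⟨x^k − y^k, d^k⟩/‖d^k‖²; x^{k+1} = P_C(x^k − γ ρ_k β_k F(y^k) + e2^k); and assume Σ_{k=0}^∞ ‖e2^k‖ < +∞ and {x^k} is bounded. For an integer t > 0 set Υ_t := Σ_{k=0}^t ρ_k β_k (assumed positive) and y_t := (1/Υ_t) Σ_{k=0}^t ρ_k β_k y^k. Then for every x ∈ C, ⟨F(x), y_t − x⟩ ≤ (1/(2γΥ_t))·(‖x − x^0‖² + 2M(x)), where M(x) := (sup_k ‖x^{k+1} − x‖)·Σ_{k=0}^∞ ‖e2^k‖.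 -/
/-!
Each iteration is a Fejér-type descent step with an error term. Testing the projection
defining `y k` at `x (k+1)`, and the one defining `x (k+1)` at `z`, gives
`‖x (k+1) - z‖² ≤ ‖x k - z‖² - 2γρ_kβ_k⟪F (y k), y k - z⟫ + 2‖e2 k‖‖x (k+1) - z‖ - γ(2-γ)ρ_k²‖d k‖²`,
where the last term is dropped because `γ ≤ 2`, and `ρ_k ≥ 0` because
`⟪x k - y k, d k⟫ ≥ (1 - ν - μ)‖x k - y k‖²`. Monotonicity replaces `F (y k)` by `F z`;
summing over `k ≤ t` telescopes, and dividing by `Υ_t` turns the weighted sum into the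
inner product with the ergodic average `y_t`.
-/

open RealInnerProductSpace Finset

section

variable {H : Type*} [NormedAddCommGroup H] [InnerProductSpace ℝ H]

lemma inner_sub_smul_add_nonneg {a b e : H} {ν μ β : ℝ} (hνμ : ν + μ ≤ 1) (hβ : 0 ≤ β)
    (hb : β * ‖b‖ ≤ ν * ‖a‖) (he : ‖e‖ ≤ μ * ‖a‖) : 0 ≤ ⟪a, a - β • b + e⟫ := by
  have hab := real_inner_le_norm a (β • b)
  have hae := neg_le_of_abs_le (abs_real_inner_le_norm a e)
  rw [norm_smul, Real.norm_of_nonneg hβ] at hab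
  rw [inner_add_right, inner_sub_right, real_inner_self_eq_norm_sq]
  nlinarith [mul_le_mul_of_nonneg_left hb (norm_nonneg a),
    mul_le_mul_of_nonneg_left he (norm_nonneg a), sq_nonneg ‖a‖]

lemma inner_eq_div_sq_norm_mul_sq_norm (a d : H) : ⟪a, d⟫ = ⟪a, d⟫ / ‖d‖ ^ 2 * ‖d‖ ^ 2 := by
  rcases eq_or_ne d 0 with rfl | hd
  · simp
  · rw [div_mul_cancel₀ _ (by positivity)]

lemma norm_sub_sq_le_of_inner_sub_le {u p c : H} (x : H) (h : ⟪u - p, c - p⟫ ≤ 0) :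
    ‖p - c‖ ^ 2 ≤ ‖x - c‖ ^ 2 - ‖p - x‖ ^ 2 + 2 * ⟪u - x, p - c⟫ := by
  have hx : x - c = (x - p) + (p - c) := by abel
  have hpu : ⟪p - u, p - c⟫ = ⟪u - p, c - p⟫ := by
    rw [← inner_neg_neg, neg_sub, neg_sub]
  have hsplit : ⟪u - x, p - c⟫ = ⟪p - x, p - c⟫ - ⟪p - u, p - c⟫ := by
    rw [← inner_sub_left, sub_sub_sub_cancel_left]
  rw [hx, norm_add_sq_real, ← norm_neg (x - p), neg_sub, hsplit, hpu,
    show x - p = -(p - x) by abel, inner_neg_left]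
  linarith

lemma neg_two_mul_inner_sub_sq_norm_le (s : ℝ) (d w : H) :
    -(2 * s * ⟪d, w⟫) - ‖w‖ ^ 2 ≤ s ^ 2 * ‖d‖ ^ 2 := by
  have h := norm_add_sq_real (s • d) w
  rw [real_inner_smul_left, norm_smul, mul_pow, Real.norm_eq_abs, sq_abs] at h
  nlinarith [sq_nonneg ‖s • d + w‖]

lemma pc_step_descent {C : Set H} {P : H → H} (hPmem : ∀ u, P u ∈ C)
    (hPchar : ∀ u, ∀ c ∈ C, ⟪u - P u, c - P u⟫ ≤ 0) {F : H → H}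
    (hmono : ∀ u v, 0 ≤ ⟪F u - F v, u - v⟫) {γ ρ β : ℝ} (hγ : 0 ≤ γ) (hγ2 : γ ≤ 2)
    (hρ : 0 ≤ ρ) (hβ : 0 ≤ β) {x y d e1 e2 x' z : H} (hy : y = P (x - β • F x + e1))
    (hd : d = x - y - β • (F x - F y) + e1) (hρd : ⟪x - y, d⟫ = ρ * ‖d‖ ^ 2)
    (hx' : x' = P (x - (γ * ρ * β) • F y + e2)) (hz : z ∈ C) :
    2 * γ * (ρ * β * ⟪F z, y - z⟫) ≤
      ‖x - z‖ ^ 2 - ‖x' - z‖ ^ 2 + ‖e2‖ * (2 * ‖x' - z‖) := by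
  have hx'C : x' ∈ C := hx' ▸ hPmem _
  have hy_var : ⟪d, x' - y⟫ ≤ β * ⟪F y, x' - y⟫ := by
    have h := hPchar (x - β • F x + e1) x' hx'C
    rw [← hy, show x - β • F x + e1 - y = d - β • F y by rw [hd, smul_sub]; abel,
      inner_sub_left, real_inner_smul_left] at h
    linarith
  have hdesc : ‖x' - z‖ ^ 2 ≤ ‖x - z‖ ^ 2 - ‖x' - x‖ ^ 2 +
      2 * (⟪e2, x' - z⟫ - γ * ρ * β * ⟪F y, x' - z⟫) := by
    have h := hPchar (x - (γ * ρ * β) • F y + e2) z hz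
    rw [← hx'] at h
    have := norm_sub_sq_le_of_inner_sub_le x h
    rwa [show x - (γ * ρ * β) • F y + e2 - x = e2 - (γ * ρ * β) • F y by abel,
      inner_sub_left, real_inner_smul_left] at this
  have hFy : ⟪F y, x' - z⟫ = ⟪F y, y - z⟫ + ⟪F y, x' - y⟫ := by
    rw [← inner_add_right, sub_add_sub_cancel']
  have hd_split : ⟪d, x' - y⟫ = ⟪d, x' - x⟫ + ρ * ‖d‖ ^ 2 := by
    rw [← hρd, real_inner_comm d (x - y), ← inner_add_right, sub_add_sub_cancel]
  have hmono_z : ⟪F z, y - z⟫ ≤ ⟪F y, y - z⟫ := by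
    have := hmono y z
    rw [inner_sub_left] at this
    linarith
  have hγρ : 0 ≤ γ * ρ := mul_nonneg hγ hρ
  have hγρβ : 0 ≤ γ * ρ * β := mul_nonneg hγρ hβ
  have hyoung := neg_two_mul_inner_sub_sq_norm_le (γ * ρ) d (x' - x)
  have h_e2 := real_inner_le_norm e2 (x' - z)
  nlinarith [mul_le_mul_of_nonneg_left hy_var hγρ, mul_le_mul_of_nonneg_left hmono_z hγρβ,
    mul_nonneg (mul_nonneg hγ (sub_nonneg.2 hγ2)) (mul_nonneg (sq_nonneg ρ) (sq_nonneg ‖d‖))]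

end

lemma sum_range_le_of_le_sub_add_s9 {a D ε r : ℕ → ℝ} {M : ℝ} (n : ℕ)
    (hstep : ∀ k, a k ≤ D k - D (k + 1) + ε k * r k) (hD : 0 ≤ D n) (hε : ∀ k, 0 ≤ ε k)
    (hsum : Summable ε) (hr : ∀ k, r k ≤ M) (hM : 0 ≤ M) :
    ∑ k ∈ range n, a k ≤ D 0 + M * ∑' k, ε k :=
  calc ∑ k ∈ range n, a k ≤ ∑ k ∈ range n, (D k - D (k + 1) + ε k * r k) :=
        sum_le_sum fun k _ => hstep k
    _ = D 0 - D n + ∑ k ∈ range n, ε k * r k := by rw [sum_add_distrib, sum_range_sub']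
    _ ≤ D 0 + M * ∑ k ∈ range n, ε k := by
        rw [mul_sum]
        have := sum_le_sum fun k (_ : k ∈ range n) =>
          (mul_le_mul_of_nonneg_left (hr k) (hε k)).trans_eq (mul_comm (ε k) M)
        linarith
    _ ≤ D 0 + M * ∑' k, ε k := by
        gcongr
        exact hsum.sum_le_tsum _ fun k _ => hε k

lemma inner_centerMass_sub {ι H : Type*} [NormedAddCommGroup H] [InnerProductSpace ℝ H]
    (s : Finset ι) (w : ι → ℝ) (y : ι → H) (v z : H) (hw : ∑ i ∈ s, w i ≠ 0) :
    ⟪v, s.centerMass w y - z⟫ = (∑ i ∈ s, w i)⁻¹ * ∑ i ∈ s, w i * ⟪v, y i - z⟫ := by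
  simp only [centerMass, inner_sub_right, real_inner_smul_right, inner_sum, mul_sub,
    sum_sub_distrib, ← sum_mul]
  field_simp
theorem stmt_9_general {H : Type*} [NormedAddCommGroup H] [InnerProductSpace ℝ H]
    (C : Set H)
    (P : H → H) (hPmem : ∀ u : H, P u ∈ C)
    (hPchar : ∀ u : H, ∀ c ∈ C, ⟪u - P u, c - P u⟫ ≤ 0)
    (F : H → H) (hmono : ∀ u v : H, 0 ≤ ⟪F u - F v, u - v⟫)
    (ν μ γ : ℝ) (hμ : μ ∈ Set.Ico (0 : ℝ) (1 - ν))
    (hγ : γ ∈ Set.Ioo (0 : ℝ) 2)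
    (e1 e2 : ℕ → H) (he2 : Summable (fun k => ‖e2 k‖))
    (x y : ℕ → H) (β : ℕ → ℝ) (d : ℕ → H) (ρ : ℕ → ℝ)
    (hβpos : ∀ k, 0 < β k)
    (hy : ∀ k, y k = P (x k - β k • F (x k) + e1 k))
    (hstep : ∀ k, β k * ‖F (x k) - F (y k)‖ ≤ ν * ‖x k - y k‖)
    (he1b : ∀ k, ‖e1 k‖ ≤ μ * ‖x k - y k‖)
    (hd : ∀ k, d k = (x k - y k) - β k • (F (x k) - F (y k)) + e1 k)
    (hρ : ∀ k, ρ k = ⟪x k - y k, d k⟫ / ‖d k‖ ^ 2)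
    (hx : ∀ k, x (k + 1) = P (x k - (γ * ρ k * β k) • F (y k) + e2 k))
    (hbdd : ∃ R : ℝ, ∀ k, ‖x k‖ ≤ R)
    (t : ℕ)
    (hΥ : 0 < ∑ k ∈ Finset.range (t + 1), ρ k * β k) :
    ∀ z ∈ C,
      ⟪F z, ((∑ k ∈ Finset.range (t + 1), ρ k * β k)⁻¹ •
          ∑ k ∈ Finset.range (t + 1), (ρ k * β k) • y k) - z⟫ ≤
        (1 / (2 * γ * ∑ k ∈ Finset.range (t + 1), ρ k * β k)) *
          (‖z - x 0‖ ^ 2 +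
            2 * ((⨆ k : ℕ, ‖x (k + 1) - z‖) * ∑' k : ℕ, ‖e2 k‖)) := by
  intro z hz
  have hρ_nonneg (k : ℕ) : 0 ≤ ρ k := by
    rw [hρ k, hd k]
    exact div_nonneg (inner_sub_smul_add_nonneg (by linarith [hμ.2]) (hβpos k).le (hstep k)
      (he1b k)) (sq_nonneg _)
  have hdescent (k : ℕ) := pc_step_descent hPmem hPchar hmono hγ.1.le hγ.2.le (hρ_nonneg k)
    (hβpos k).le (hy k) (hd k) ((hρ k).symm ▸ inner_eq_div_sq_norm_mul_sq_norm _ _) (hx k) hz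
  obtain ⟨R, hR⟩ := hbdd
  have hbddAbove : BddAbove (Set.range fun k => ‖x (k + 1) - z‖) :=
    ⟨R + ‖z‖, Set.forall_mem_range.2 fun k => (norm_sub_le _ _).trans (by linarith [hR (k + 1)])⟩
  have hsum := sum_range_le_of_le_sub_add_s9 (t + 1) hdescent (sq_nonneg _)
    (fun k => norm_nonneg (e2 k)) he2
    (fun k => mul_le_mul_of_nonneg_left (le_ciSup hbddAbove k) zero_le_two)
    (mul_nonneg zero_le_two (Real.iSup_nonneg fun k => norm_nonneg _))
  rw [← mul_sum] at hsum
  change ⟪F z, (range (t + 1)).centerMass (fun k => ρ k * β k) y - z⟫ ≤ _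
  rw [inner_centerMass_sub _ _ _ _ _ hΥ.ne', norm_sub_rev z]
  calc _ = 1 / (2 * γ * ∑ k ∈ range (t + 1), ρ k * β k) *
        (2 * γ * ∑ k ∈ range (t + 1), ρ k * β k * ⟪F z, y k - z⟫) := by
          field_simp [hγ.1.ne']
    _ ≤ _ := by
      refine mul_le_mul_of_nonneg_left (hsum.trans_eq (by ring)) ?_
      have := hγ.1
      positivity

theorem stmt_9 {H : Type*} [NormedAddCommGroup H] [InnerProductSpace ℝ H]
    [CompleteSpace H]
    (C : Set H) (hCne : C.Nonempty) (hCcl : IsClosed C) (hCcv : Convex ℝ C)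
    (P : H → H) (hPmem : ∀ u : H, P u ∈ C)
    (hPchar : ∀ u : H, ∀ c ∈ C, ⟪u - P u, c - P u⟫ ≤ 0)
    (F : H → H) (hmono : ∀ u v : H, 0 ≤ ⟪F u - F v, u - v⟫)
    (L : ℝ) (hL : 0 < L) (hLip : ∀ u v : H, ‖F u - F v‖ ≤ L * ‖u - v‖)
    (ν μ γ : ℝ) (hν : ν ∈ Set.Ioo (0 : ℝ) 1) (hμ : μ ∈ Set.Ico (0 : ℝ) (1 - ν))
    (hγ : γ ∈ Set.Ioo (0 : ℝ) 2)
    (e1 e2 : ℕ → H) (he2 : Summable (fun k => ‖e2 k‖))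
    (x y : ℕ → H) (β : ℕ → ℝ) (d : ℕ → H) (ρ : ℕ → ℝ)
    (hβpos : ∀ k, 0 < β k)
    (hy : ∀ k, y k = P (x k - β k • F (x k) + e1 k))
    (hstep : ∀ k, β k * ‖F (x k) - F (y k)‖ ≤ ν * ‖x k - y k‖)
    (he1b : ∀ k, ‖e1 k‖ ≤ μ * ‖x k - y k‖)
    (hd : ∀ k, d k = (x k - y k) - β k • (F (x k) - F (y k)) + e1 k)
    (hdne : ∀ k, d k ≠ 0)
    (hρ : ∀ k, ρ k = ⟪x k - y k, d k⟫ / ‖d k‖ ^ 2)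
    (hx : ∀ k, x (k + 1) = P (x k - (γ * ρ k * β k) • F (y k) + e2 k))
    (hbdd : ∃ R : ℝ, ∀ k, ‖x k‖ ≤ R)
    (t : ℕ) (ht : 0 < t)
    (hΥ : 0 < ∑ k ∈ Finset.range (t + 1), ρ k * β k) :
    ∀ z ∈ C,
      ⟪F z, ((∑ k ∈ Finset.range (t + 1), ρ k * β k)⁻¹ •
          ∑ k ∈ Finset.range (t + 1), (ρ k * β k) • y k) - z⟫ ≤
        (1 / (2 * γ * ∑ k ∈ Finset.range (t + 1), ρ k * β k)) *
          (‖z - x 0‖ ^ 2 +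
            2 * ((⨆ k : ℕ, ‖x (k + 1) - z‖) * ∑' k : ℕ, ‖e2 k‖)) :=
  stmt_9_general C P hPmem hPchar F hmono ν μ γ hμ hγ e1 e2 he2 x y β d ρ hβpos hy hstep he1b hd hρ
    hx hbdd t hΥ
end

section
/- (Bounded perturbation resilience of the PC-algorithm II.) Let ν ∈ (0,1) and γ ∈ (0,2). Let {v^k} be a bounded sequence in H and {λ_k} nonnegative reals with Σ_{k=0}^∞ λ_k < +∞. Let x^0 ∈ H and let {x^k}, {y^k}, {β_k} satisfy, for every k ≥ 0, with w^k := x^k + λ_k v^k: β_k > 0 with inf_k β_k > 0; y^k = P_C(w^k − β_k F(w^k)); β_k‖F(w^k) − F(y^k)‖ ≤ ν‖w^k − y^k‖; d^k := (w^k − y^k) − β_k(F(w^k) − F(y^k)) ≠ 0; ρ_k := ⟨w^k − y^k, d^k⟩/‖d^k‖²; and x^{k+1} = P_C(w^k − γ ρ_k β_k F(y^k)). Then {x^k} converges weakly (i.e., ⟨x^k, u⟩ → ⟨x̂, u⟩ for every u ∈ H) to some point x̂ ∈ SOL(C,F). -/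
open RealInnerProductSpace Filter

/-- Key one-step inequality for PC algorithm II. -/
lemma pc_key {H : Type*} [NormedAddCommGroup H] [InnerProductSpace ℝ H]
    (W Y X' p' fW fY D : H) (β ρ γ : ℝ) (hβ : 0 ≤ β) (hρ : 0 ≤ ρ) (hγ : 0 ≤ γ)
    (hD : D = (W - Y) - β • (fW - fY))
    (hrho : ⟪W - Y, D⟫ = ρ * ‖D‖ ^ 2)
    (h1 : ⟪(W - (γ * ρ * β) • fY) - X', p' - X'⟫ ≤ 0)
    (h2 : ⟪(W - β • fW) - Y, X' - Y⟫ ≤ 0)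
    (h3 : ⟪fY, p' - Y⟫ ≤ 0) :
    ‖X' - p'‖ ^ 2 ≤ ‖W - p'‖ ^ 2 - γ * (2 - γ) * (ρ ^ 2 * ‖D‖ ^ 2) := by
  have e1 : ⟪W - X', p' - X'⟫ ≤ (γ * ρ * β) * ⟪fY, p' - X'⟫ := by
    have hre : W - (γ * ρ * β) • fY - X' = (W - X') - (γ * ρ * β) • fY := by abel
    rw [hre, inner_sub_left, real_inner_smul_left] at h1
    linarith
  have e2 : ⟪fY, p' - X'⟫ ≤ ⟪fY, Y - X'⟫ := by
    have : p' - X' = (p' - Y) + (Y - X') := by abel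
    rw [this, inner_add_right]; linarith
  have e3 : β * ⟪fY, Y - X'⟫ = ⟪(β • fW - (W - Y)), Y - X'⟫ + ⟪D, Y - X'⟫ := by
    rw [← real_inner_smul_left, ← inner_add_left]
    congr 1
    rw [hD, smul_sub]; abel
  have e4 : ⟪(β • fW - (W - Y)), Y - X'⟫ ≤ 0 := by
    have : (β • fW - (W - Y)) = -((W - β • fW) - Y) := by abel
    rw [this, inner_neg_left]
    have h2' : ⟪(W - β • fW) - Y, X' - Y⟫ = -⟪(W - β • fW) - Y, Y - X'⟫ := by
      rw [← inner_neg_right]; congr 1; abel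
    linarith
  have e5 : ⟪D, Y - X'⟫ = -(ρ * ‖D‖ ^ 2) + ⟪D, W - X'⟫ := by
    have : Y - X' = -(W - Y) + (W - X') := by abel
    have hrho' : ⟪D, W - Y⟫ = ρ * ‖D‖ ^ 2 := by rw [real_inner_comm]; exact hrho
    rw [this, inner_add_right, inner_neg_right, hrho']
  have e6 : 2 * ((γ * ρ) * ⟪D, W - X'⟫) ≤ (γ * ρ) ^ 2 * ‖D‖ ^ 2 + ‖W - X'‖ ^ 2 := by
    have h := real_inner_smul_left D (W - X') (γ * ρ)
    have hcs : 2 * ⟪(γ * ρ) • D, W - X'⟫ ≤ ‖(γ * ρ) • D‖ ^ 2 + ‖W - X'‖ ^ 2 := by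
      have := sq_nonneg (‖(γ * ρ) • D - (W - X')‖)
      rw [@norm_sub_sq_real] at this
      linarith
    rw [h, norm_smul, mul_pow, Real.norm_eq_abs, sq_abs] at hcs
    nlinarith [hcs]
  have idty : ‖X' - p'‖ ^ 2 = ‖W - p'‖ ^ 2 - ‖W - X'‖ ^ 2 + 2 * ⟪W - X', p' - X'⟫ := by
    have h1' : X' - p' = (W - p') - (W - X') := by abel
    rw [h1', norm_sub_sq_real]
    have h2' : ⟪W - X', p' - X'⟫ = -⟪W - p', W - X'⟫ + ‖W - X'‖ ^ 2 := by
      have : p' - X' = -(W - p') + (W - X') := by abel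
      rw [this, inner_add_right, inner_neg_right, real_inner_comm,
        real_inner_self_eq_norm_sq]
    rw [h2']; ring
  -- combine
  have key : ⟪W - X', p' - X'⟫ ≤ (γ * ρ) * (-(ρ * ‖D‖ ^ 2) + ⟪D, W - X'⟫) := by
    calc ⟪W - X', p' - X'⟫ ≤ (γ * ρ * β) * ⟪fY, p' - X'⟫ := e1
      _ ≤ (γ * ρ * β) * ⟪fY, Y - X'⟫ := by
          apply mul_le_mul_of_nonneg_left e2 (by positivity)
      _ = (γ * ρ) * (β * ⟪fY, Y - X'⟫) := by ring
      _ = (γ * ρ) * (⟪(β • fW - (W - Y)), Y - X'⟫ + ⟪D, Y - X'⟫) := by rw [e3]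
      _ ≤ (γ * ρ) * ⟪D, Y - X'⟫ := by nlinarith [mul_nonneg hγ hρ, e4]
      _ = (γ * ρ) * (-(ρ * ‖D‖ ^ 2) + ⟪D, W - X'⟫) := by rw [e5]
  nlinarith [key, e6, idty]

/-- Summability of slack terms in a quasi-Fejér inequality. -/
lemma pc_slack_summable (a s E : ℕ → ℝ) (ha : ∀ k, 0 ≤ a k) (hs : ∀ k, 0 ≤ s k)
    (hE0 : ∀ k, 0 ≤ E k) (hE : Summable E)
    (h : ∀ k, a (k + 1) + s k ≤ a k + E k) : Summable s := by
  apply summable_of_sum_range_le hs (c := a 0 + ∑' k, E k)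
  intro n
  have key : ∀ n, a n + ∑ k ∈ Finset.range n, s k ≤ a 0 + ∑ k ∈ Finset.range n, E k := by
    intro n
    induction n with
    | zero => simp
    | succ m ih =>
      rw [Finset.sum_range_succ, Finset.sum_range_succ]
      have := h m
      linarith
  have hle : ∑ k ∈ Finset.range n, E k ≤ ∑' k, E k := Summable.sum_le_tsum (Finset.range n) (fun i _ => hE0 i) hE
  have := key n
  have := ha n
  linarith

/-- Convergence of a nonnegative quasi-Fejér monotone real sequence. -/
lemma pc_converges (a E : ℕ → ℝ) (ha : ∀ k, 0 ≤ a k)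
    (hE0 : ∀ k, 0 ≤ E k) (hE : Summable E)
    (h : ∀ k, a (k + 1) ≤ a k + E k) : ∃ l, Tendsto a atTop (nhds l) := by
  set T : ℕ → ℝ := fun n => ∑' j, E (j + n) with hT
  have hTs : ∀ n, Summable fun j => E (j + n) := fun n => (summable_nat_add_iff n).2 hE
  have hT0 : ∀ n, 0 ≤ T n := fun n => tsum_nonneg (fun j => hE0 _)
  have hTrec : ∀ n, T n = E n + T (n + 1) := by
    intro n
    have h0 := Summable.tsum_eq_zero_add (hTs n)
    rw [zero_add] at h0
    rw [hT]
    simp only []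
    rw [h0]
    congr 1
    exact tsum_congr fun j => by rw [show j + 1 + n = j + (n + 1) by ring]
  have hTtend : Tendsto T atTop (nhds 0) := tendsto_sum_nat_add E
  set b : ℕ → ℝ := fun n => a n + T n with hb
  have hanti : Antitone b := by
    apply antitone_nat_of_succ_le
    intro n
    have h1 := h n
    have h2 := hTrec n
    simp only [hb]
    linarith
  have hbdd : BddBelow (Set.range b) := by
    refine ⟨0, ?_⟩
    rintro _ ⟨n, rfl⟩
    exact add_nonneg (ha n) (hT0 n)
  have hbt : Tendsto b atTop (nhds (⨅ n, b n)) := tendsto_atTop_ciInf hanti hbdd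
  refine ⟨(⨅ n, b n) - 0, ?_⟩
  have : ∀ n, a n = b n - T n := fun n => by simp [hb]
  simp only [funext this]
  exact hbt.sub hTtend

/-- A bounded sequence in a Hilbert space has a weak limit along any ultrafilter. -/
lemma pc_weak_limit {H : Type*} [NormedAddCommGroup H] [InnerProductSpace ℝ H]
    [CompleteSpace H] (x : ℕ → H) (B : ℝ) (hB : ∀ k, ‖x k‖ ≤ B) (𝒱 : Ultrafilter ℕ) :
    ∃ q : H, ∀ u : H, Tendsto (fun k => ⟪x k, u⟫) 𝒱 (nhds ⟪q, u⟫) := by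
  have hBn : 0 ≤ B := le_trans (norm_nonneg _) (hB 0)
  have hub : ∀ (u : H) (k : ℕ), |⟪x k, u⟫| ≤ B * ‖u‖ := by
    intro u k
    calc |⟪x k, u⟫| ≤ ‖x k‖ * ‖u‖ := abs_real_inner_le_norm _ _
      _ ≤ B * ‖u‖ := mul_le_mul_of_nonneg_right (hB k) (norm_nonneg u)
  have hlim : ∀ u : H, ∃ c, Tendsto (fun k => ⟪x k, u⟫) 𝒱 (nhds c) := by
    intro u
    have hmem : (↑(𝒱.map (fun k => ⟪x k, u⟫)) : Filter ℝ)
        ≤ Filter.principal (Set.Icc (-(B * ‖u‖)) (B * ‖u‖)) := by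
      rw [Filter.le_principal_iff]
      refine Filter.mem_map.2 (Filter.mem_of_superset Filter.univ_mem ?_)
      intro k _
      have := hub u k
      rw [abs_le] at this
      exact ⟨this.1, this.2⟩
    obtain ⟨c, _, hc⟩ := isCompact_Icc.ultrafilter_le_nhds _ hmem
    exact ⟨c, hc⟩
  choose g hg using hlim
  have hadd : ∀ u u', g (u + u') = g u + g u' := by
    intro u u'
    refine tendsto_nhds_unique (hg (u + u')) ?_
    have := (hg u).add (hg u')
    simpa [inner_add_right] using this
  have hsmul : ∀ (r : ℝ) (u : H), g (r • u) = r * g u := by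
    intro r u
    refine tendsto_nhds_unique (hg (r • u)) ?_
    have := (hg u).const_mul r
    simpa [inner_smul_right] using this
  have hbound : ∀ u, |g u| ≤ B * ‖u‖ := by
    intro u
    exact le_of_tendsto (hg u).abs (Filter.Eventually.of_forall fun k => hub u k)
  let flin : H →ₗ[ℝ] ℝ :=
    { toFun := g, map_add' := hadd, map_smul' := hsmul }
  let fc : H →L[ℝ] ℝ := flin.mkContinuous B (fun u => by
    simpa [Real.norm_eq_abs, flin] using hbound u)
  refine ⟨(InnerProductSpace.toDual ℝ H).symm fc, fun u => ?_⟩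
  have h1 : ⟪(InnerProductSpace.toDual ℝ H).symm fc, u⟫ = fc u :=
    InnerProductSpace.toDual_symm_apply
  rw [h1]
  exact hg u

set_option maxHeartbeats 2000000 in
theorem stmt_12 {H : Type*} [NormedAddCommGroup H] [InnerProductSpace ℝ H]
    [CompleteSpace H]
    (C : Set H) (hCne : C.Nonempty) (hCcl : IsClosed C) (hCcv : Convex ℝ C)
    (P : H → H) (hPmem : ∀ u : H, P u ∈ C)
    (hPchar : ∀ u : H, ∀ c ∈ C, ⟪u - P u, c - P u⟫ ≤ 0)
    (F : H → H) (hmono : ∀ u v : H, 0 ≤ ⟪F u - F v, u - v⟫)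
    (L : ℝ) (hL : 0 < L) (hLip : ∀ u v : H, ‖F u - F v‖ ≤ L * ‖u - v‖)
    (hSOL : ∃ p ∈ C, ∀ z ∈ C, 0 ≤ ⟪F p, z - p⟫)
    (ν γ : ℝ) (hν : ν ∈ Set.Ioo (0 : ℝ) 1) (hγ : γ ∈ Set.Ioo (0 : ℝ) 2)
    (v : ℕ → H) (hv : ∃ M : ℝ, ∀ k, ‖v k‖ ≤ M)
    (lam : ℕ → ℝ) (hlam : ∀ k, 0 ≤ lam k) (hlamsum : Summable lam)
    (x y w : ℕ → H) (β : ℕ → ℝ) (d : ℕ → H) (ρ : ℕ → ℝ)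
    (hw : ∀ k, w k = x k + lam k • v k)
    (hβpos : ∀ k, 0 < β k) (hβinf : ∃ b > (0 : ℝ), ∀ k, b ≤ β k)
    (hy : ∀ k, y k = P (w k - β k • F (w k)))
    (hstep : ∀ k, β k * ‖F (w k) - F (y k)‖ ≤ ν * ‖w k - y k‖)
    (hd : ∀ k, d k = (w k - y k) - β k • (F (w k) - F (y k)))
    (hdne : ∀ k, d k ≠ 0)
    (hρ : ∀ k, ρ k = ⟪w k - y k, d k⟫ / ‖d k‖ ^ 2)
    (hx : ∀ k, x (k + 1) = P (w k - (γ * ρ k * β k) • F (y k))) :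
    ∃ xhat, (xhat ∈ C ∧ ∀ z ∈ C, 0 ≤ ⟪F xhat, z - xhat⟫) ∧
      ∀ u : H, Filter.Tendsto (fun k => ⟪x k, u⟫) Filter.atTop (nhds ⟪xhat, u⟫) := by
  obtain ⟨hν0, hν1⟩ := hν
  obtain ⟨hγ0, hγ2⟩ := hγ
  obtain ⟨p, hpC, hpSOL⟩ := hSOL
  obtain ⟨M0, hM0⟩ := hv
  set M : ℝ := max M0 0 with hM
  have hMnn : 0 ≤ M := le_max_right _ _
  have hvM : ∀ k, ‖v k‖ ≤ M := fun k => le_trans (hM0 k) (le_max_left _ _)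
  obtain ⟨b, hb0, hbβ⟩ := hβinf
  have hyC : ∀ k, y k ∈ C := fun k => (hy k) ▸ hPmem _
  have hxC : ∀ k, x (k + 1) ∈ C := fun k => (hx k) ▸ hPmem _
  -- basic estimates
  have hwy : ∀ k, w k - y k ≠ 0 := by
    intro k h
    apply hdne k
    have h' : w k = y k := sub_eq_zero.mp h
    rw [hd k, h']
    simp
  have hwypos : ∀ k, 0 < ‖w k - y k‖ := fun k => norm_pos_iff.2 (hwy k)
  have hdpos : ∀ k, 0 < ‖d k‖ := fun k => norm_pos_iff.2 (hdne k)
  have hlow : ∀ k, (1 - ν) * ‖w k - y k‖ ^ 2 ≤ ⟪w k - y k, d k⟫ := by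
    intro k
    rw [hd k, inner_sub_right, real_inner_self_eq_norm_sq, real_inner_smul_right]
    have hcs : ⟪w k - y k, F (w k) - F (y k)⟫ ≤ ‖w k - y k‖ * ‖F (w k) - F (y k)‖ :=
      real_inner_le_norm _ _
    have h2 : β k * ⟪w k - y k, F (w k) - F (y k)⟫ ≤ ν * ‖w k - y k‖ ^ 2 := by
      calc β k * ⟪w k - y k, F (w k) - F (y k)⟫
          ≤ β k * (‖w k - y k‖ * ‖F (w k) - F (y k)‖) :=
            mul_le_mul_of_nonneg_left hcs (le_of_lt (hβpos k))
        _ = (β k * ‖F (w k) - F (y k)‖) * ‖w k - y k‖ := by ring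
        _ ≤ (ν * ‖w k - y k‖) * ‖w k - y k‖ :=
            mul_le_mul_of_nonneg_right (hstep k) (norm_nonneg _)
        _ = ν * ‖w k - y k‖ ^ 2 := by ring
    linarith
  have hinn : ∀ k, 0 ≤ ⟪w k - y k, d k⟫ := by
    intro k
    refine le_trans ?_ (hlow k)
    have : (0:ℝ) ≤ 1 - ν := by linarith
    positivity
  have hρnn : ∀ k, 0 ≤ ρ k := by
    intro k
    rw [hρ k]
    exact div_nonneg (hinn k) (by positivity)
  have hρd : ∀ k, ⟪w k - y k, d k⟫ = ρ k * ‖d k‖ ^ 2 := by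
    intro k
    rw [hρ k, div_mul_cancel₀]
    exact pow_ne_zero _ (ne_of_gt (hdpos k))
  have hdle : ∀ k, ‖d k‖ ≤ (1 + ν) * ‖w k - y k‖ := by
    intro k
    rw [hd k]
    calc ‖(w k - y k) - β k • (F (w k) - F (y k))‖
        ≤ ‖w k - y k‖ + ‖β k • (F (w k) - F (y k))‖ := norm_sub_le _ _
      _ = ‖w k - y k‖ + β k * ‖F (w k) - F (y k)‖ := by
          rw [norm_smul, Real.norm_eq_abs, abs_of_pos (hβpos k)]
      _ ≤ ‖w k - y k‖ + ν * ‖w k - y k‖ := by linarith [hstep k]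
      _ = (1 + ν) * ‖w k - y k‖ := by ring
  have hres : ∀ k, ((1 - ν) / (1 + ν)) ^ 2 * ‖w k - y k‖ ^ 2 ≤ ρ k ^ 2 * ‖d k‖ ^ 2 := by
    intro k
    have hne : (‖d k‖ : ℝ) ^ 2 ≠ 0 := pow_ne_zero _ (ne_of_gt (hdpos k))
    have h1 : ρ k ^ 2 * ‖d k‖ ^ 2 = ⟪w k - y k, d k⟫ ^ 2 / ‖d k‖ ^ 2 := by
      rw [hρ k, div_pow, sq (‖d k‖ ^ 2), ← div_div, div_mul_cancel₀ _ hne]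
    rw [h1, le_div_iff₀ (pow_pos (hdpos k) 2)]
    have hd2 : ‖d k‖ ^ 2 ≤ (1 + ν) ^ 2 * ‖w k - y k‖ ^ 2 := by
      have := hdle k
      nlinarith [norm_nonneg (d k)]
    have hl := hlow k
    have hc : ((1 - ν) / (1 + ν)) ^ 2 * (1 + ν) ^ 2 = (1 - ν) ^ 2 := by
      field_simp
    have h1ν : (0:ℝ) ≤ 1 - ν := by linarith
    have e1 : ((1 - ν) / (1 + ν)) ^ 2 * ‖w k - y k‖ ^ 2 * ‖d k‖ ^ 2
        ≤ ((1 - ν) / (1 + ν)) ^ 2 * ‖w k - y k‖ ^ 2 * ((1 + ν) ^ 2 * ‖w k - y k‖ ^ 2) :=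
      mul_le_mul_of_nonneg_left hd2 (by positivity)
    have e2 : ((1 - ν) / (1 + ν)) ^ 2 * ‖w k - y k‖ ^ 2 * ((1 + ν) ^ 2 * ‖w k - y k‖ ^ 2)
        = ((1 - ν) * ‖w k - y k‖ ^ 2) ^ 2 := by
      rw [show ((1 - ν) / (1 + ν)) ^ 2 * ‖w k - y k‖ ^ 2 * ((1 + ν) ^ 2 * ‖w k - y k‖ ^ 2)
        = (((1 - ν) / (1 + ν)) ^ 2 * (1 + ν) ^ 2) * (‖w k - y k‖ ^ 2) ^ 2 by ring, hc]
      ring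
    have e3 : ((1 - ν) * ‖w k - y k‖ ^ 2) ^ 2 ≤ ⟪w k - y k, d k⟫ ^ 2 :=
      pow_le_pow_left₀ (by positivity) hl 2
    linarith
  -- Fejér-type one-step inequality for any solution
  have hFej : ∀ p' ∈ C, (∀ z ∈ C, 0 ≤ ⟪F p', z - p'⟫) → ∀ k,
      ‖x (k + 1) - p'‖ ^ 2 ≤ ‖w k - p'‖ ^ 2 - γ * (2 - γ) * (ρ k ^ 2 * ‖d k‖ ^ 2) := by
    intro p' hp'C hp'S k
    refine pc_key (w k) (y k) (x (k + 1)) p' (F (w k)) (F (y k)) (d k) (β k) (ρ k) γ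
      (le_of_lt (hβpos k)) (hρnn k) (le_of_lt hγ0) (hd k) (hρd k) ?_ ?_ ?_
    · rw [hx k]
      exact hPchar _ p' hp'C
    · rw [hy k]
      exact hPchar _ _ (hxC k)
    · have m := hmono (y k) p'
      have s := hp'S (y k) (hyC k)
      have e : ⟪F (y k), p' - y k⟫
          = -⟪F (y k) - F p', y k - p'⟫ - ⟪F p', y k - p'⟫ := by
        simp only [inner_sub_left, inner_sub_right, inner_neg_right]
        ring
      have s' : ⟪F p', y k - p'⟫ ≥ 0 := s
      rw [e]
      linarith
  -- perturbation bound
  have hwxk : ∀ (p' : H) (k : ℕ), ‖w k - p'‖ ≤ ‖x k - p'‖ + lam k * M := by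
    intro p' k
    rw [hw k]
    calc ‖x k + lam k • v k - p'‖ = ‖(x k - p') + lam k • v k‖ := by
          rw [show x k + lam k • v k - p' = (x k - p') + lam k • v k from by abel]
      _ ≤ ‖x k - p'‖ + ‖lam k • v k‖ := norm_add_le _ _
      _ ≤ ‖x k - p'‖ + lam k * M := by
          rw [norm_smul, Real.norm_eq_abs, abs_of_nonneg (hlam k)]
          have := mul_le_mul_of_nonneg_left (hvM k) (hlam k)
          linarith
  set T : ℝ := ∑' j, lam j with hT
  have hT0 : 0 ≤ T := tsum_nonneg hlam
  have hlamT : ∀ k, lam k ≤ T := fun k => Summable.le_tsum hlamsum k (fun i _ => hlam i)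
  -- quasi-Fejér machinery for any solution p'
  have hmainFej : ∀ p' ∈ C, ∀ (_ : ∀ z ∈ C, 0 ≤ ⟪F p', z - p'⟫),
      (∃ l, Filter.Tendsto (fun k => ‖x k - p'‖ ^ 2) Filter.atTop (nhds l)) ∧
        Summable (fun k => γ * (2 - γ) * (ρ k ^ 2 * ‖d k‖ ^ 2)) ∧
        (∀ k, ‖x k - p'‖ ≤ ‖x 0 - p'‖ + M * T) := by
    intro p' hp'C hp'S
    set a : ℕ → ℝ := fun k => ‖x k - p'‖ with ha
    have hs0 : ∀ k, 0 ≤ γ * (2 - γ) * (ρ k ^ 2 * ‖d k‖ ^ 2) := by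
      intro k
      have h2γ : (0:ℝ) ≤ 2 - γ := by linarith
      positivity
    have hstep1 : ∀ k, a (k + 1) ≤ a k + lam k * M := by
      intro k
      have hf := hFej p' hp'C hp'S k
      have h3 : a (k + 1) ^ 2 ≤ ‖w k - p'‖ ^ 2 := by
        have := hs0 k
        simp only [ha]
        linarith
      have h5 : a (k + 1) ≤ ‖w k - p'‖ := by
        have h4 := Real.sqrt_le_sqrt h3
        rwa [Real.sqrt_sq (norm_nonneg _), Real.sqrt_sq (norm_nonneg _)] at h4
      exact le_trans h5 (hwxk p' k)
    have hbdd : ∀ k, a k ≤ a 0 + M * T := by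
      intro k
      have key : ∀ n, a n ≤ a 0 + M * ∑ j ∈ Finset.range n, lam j := by
        intro n
        induction n with
        | zero => simp
        | succ m ih =>
          rw [Finset.sum_range_succ]
          have := hstep1 m
          linarith [this, ih]
      have hps : ∑ j ∈ Finset.range k, lam j ≤ T :=
        Summable.sum_le_tsum (Finset.range k) (fun i _ => hlam i) hlamsum
      have := key k
      nlinarith [hMnn]
    set E : ℕ → ℝ := fun k => 2 * (a 0 + M * T) * (M * lam k) + (M * lam k) ^ 2 with hE
    have hE0 : ∀ k, 0 ≤ E k := by
      intro k
      have h1 : 0 ≤ a 0 := norm_nonneg _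
      have h2 : 0 ≤ M * lam k := mul_nonneg hMnn (hlam k)
      have h3 : 0 ≤ a 0 + M * T := by positivity
      positivity
    have hEsum : Summable E := by
      apply Summable.add
      · exact ((hlamsum.mul_left M).mul_left (2 * (a 0 + M * T)))
      · have h1 : ∀ k, (M * lam k) ^ 2 ≤ (M ^ 2 * T) * lam k := by
          intro k
          have h7 := mul_le_mul_of_nonneg_left
            (mul_le_mul_of_nonneg_right (hlamT k) (hlam k)) (sq_nonneg M)
          nlinarith [h7]
        exact Summable.of_nonneg_of_le (fun k => sq_nonneg _) h1 (hlamsum.mul_left _)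
    have hkey : ∀ k, a (k + 1) ^ 2 + γ * (2 - γ) * (ρ k ^ 2 * ‖d k‖ ^ 2)
        ≤ a k ^ 2 + E k := by
      intro k
      have hf := hFej p' hp'C hp'S k
      have h4 : ‖w k - p'‖ ^ 2 ≤ (a k + lam k * M) ^ 2 := by
        apply pow_le_pow_left₀ (norm_nonneg _) (hwxk p' k)
      have h5 : (a k + lam k * M) ^ 2 = a k ^ 2 + 2 * a k * (M * lam k) + (M * lam k) ^ 2 := by
        ring
      have h6 : 2 * a k * (M * lam k) ≤ 2 * (a 0 + M * T) * (M * lam k) := by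
        have := hbdd k
        have h2 : 0 ≤ M * lam k := mul_nonneg hMnn (hlam k)
        nlinarith
      simp only [ha, hE] at *
      linarith
    refine ⟨?_, ?_, hbdd⟩
    · apply pc_converges (fun k => a k ^ 2) E (fun k => sq_nonneg _) hE0 hEsum
      intro k
      have := hkey k
      have := hs0 k
      linarith
    · exact pc_slack_summable (fun k => a k ^ 2) _ E (fun k => sq_nonneg _) hs0 hE0 hEsum hkey
  obtain ⟨_, hSsum, hbddp⟩ := hmainFej p hpC hpSOL
  have hcγ : 0 < γ * (2 - γ) := by nlinarith
  have h1ν' : (0:ℝ) < 1 - ν := by linarith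
  have h1ν'' : (0:ℝ) < 1 + ν := by linarith
  have hcν : 0 < ((1 - ν) / (1 + ν)) ^ 2 := by positivity
  have hwy0 : Filter.Tendsto (fun k => ‖w k - y k‖) Filter.atTop (nhds 0) := by
    have hs := hSsum.tendsto_atTop_zero
    have h2 : Filter.Tendsto (fun k => ‖w k - y k‖ ^ 2) Filter.atTop (nhds 0) := by
      apply squeeze_zero (fun k => sq_nonneg _)
        (g := fun k => (((1 - ν) / (1 + ν)) ^ 2)⁻¹ *
          ((γ * (2 - γ))⁻¹ * (γ * (2 - γ) * (ρ k ^ 2 * ‖d k‖ ^ 2))))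
      · intro k
        have h3 := hres k
        have h6 := mul_le_mul_of_nonneg_left h3 (le_of_lt (inv_pos.2 hcν))
        calc ‖w k - y k‖ ^ 2
            = (((1 - ν) / (1 + ν)) ^ 2)⁻¹ * (((1 - ν) / (1 + ν)) ^ 2 * ‖w k - y k‖ ^ 2) := by
              field_simp
          _ ≤ (((1 - ν) / (1 + ν)) ^ 2)⁻¹ * (ρ k ^ 2 * ‖d k‖ ^ 2) := h6
          _ = (((1 - ν) / (1 + ν)) ^ 2)⁻¹ *
              ((γ * (2 - γ))⁻¹ * (γ * (2 - γ) * (ρ k ^ 2 * ‖d k‖ ^ 2))) := by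
              congr 1
              field_simp
      · have := (hs.const_mul ((γ * (2 - γ))⁻¹)).const_mul ((((1 - ν) / (1 + ν)) ^ 2)⁻¹)
        simpa using this
    have h4 : Filter.Tendsto (fun k => Real.sqrt (‖w k - y k‖ ^ 2)) Filter.atTop
        (nhds (Real.sqrt 0)) := (Real.continuous_sqrt.tendsto 0).comp h2
    have h5 : (fun k => Real.sqrt (‖w k - y k‖ ^ 2)) = fun k => ‖w k - y k‖ :=
      funext fun k => Real.sqrt_sq (norm_nonneg _)
    rw [h5] at h4
    simpa using h4
  have hlam0 : Filter.Tendsto lam Filter.atTop (nhds 0) := hlamsum.tendsto_atTop_zero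
  have hwxv : ∀ k, ‖w k - x k‖ ≤ lam k * M := by
    intro k
    rw [hw k, add_sub_cancel_left, norm_smul, Real.norm_eq_abs, abs_of_nonneg (hlam k)]
    exact mul_le_mul_of_nonneg_left (hvM k) (hlam k)
  have hwx0 : Filter.Tendsto (fun k => ‖w k - x k‖) Filter.atTop (nhds 0) := by
    apply squeeze_zero (fun k => norm_nonneg _) hwxv
    simpa using hlam0.mul_const M
  have hyx0 : Filter.Tendsto (fun k => ‖y k - x k‖) Filter.atTop (nhds 0) := by
    apply squeeze_zero (fun k => norm_nonneg _)
      (g := fun k => ‖w k - y k‖ + ‖w k - x k‖)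
    · intro k
      calc ‖y k - x k‖ = ‖(w k - x k) - (w k - y k)‖ := by
            rw [show (w k - x k) - (w k - y k) = y k - x k from by abel]
        _ ≤ ‖w k - x k‖ + ‖w k - y k‖ := norm_sub_le _ _
        _ = ‖w k - y k‖ + ‖w k - x k‖ := by ring
    · simpa using hwy0.add hwx0
  set B : ℝ := (‖x 0 - p‖ + M * T) + ‖p‖ with hB
  have hxB : ∀ k, ‖x k‖ ≤ B := by
    intro k
    calc ‖x k‖ = ‖(x k - p) + p‖ := by rw [sub_add_cancel]
      _ ≤ ‖x k - p‖ + ‖p‖ := norm_add_le _ _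
      _ ≤ B := by have := hbddp k; rw [hB]; linarith
  -- main ultrafilter cluster point construction
  have hmain : ∀ 𝒱 : Ultrafilter ℕ, (↑𝒱 : Filter ℕ) ≤ Filter.atTop →
      ∃ q, (q ∈ C ∧ ∀ z ∈ C, 0 ≤ ⟪F q, z - q⟫) ∧
        ∀ u : H, Filter.Tendsto (fun k => ⟪x k, u⟫) ↑𝒱 (nhds ⟪q, u⟫) := by
    intro 𝒱 hV
    obtain ⟨q, hq⟩ := pc_weak_limit x B hxB 𝒱
    have hqC : q ∈ C := by
      set c := P q with hc
      have hev : ∀ᶠ k in Filter.atTop, ⟪q - c, x k - c⟫ ≤ 0 := by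
        refine Filter.eventually_atTop.2 ⟨1, fun k hk => ?_⟩
        obtain ⟨m, rfl⟩ := Nat.exists_eq_add_of_le hk
        have hmem : x (1 + m) ∈ C := by rw [add_comm]; exact hxC m
        exact hPchar q (x (1 + m)) hmem
      have hev' : ∀ᶠ k in (𝒱 : Filter ℕ), ⟪q - c, x k - c⟫ ≤ 0 := hev.filter_mono hV
      have htt : Filter.Tendsto (fun k => ⟪q - c, x k - c⟫) ↑𝒱 (nhds ⟪q - c, q - c⟫) := by
        have h1 : ∀ k, ⟪q - c, x k - c⟫ = ⟪x k, q - c⟫ - ⟪c, q - c⟫ := by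
          intro k
          rw [inner_sub_right, real_inner_comm (q - c) (x k), real_inner_comm (q - c) c]
        have h2 : ⟪q - c, q - c⟫ = ⟪q, q - c⟫ - ⟪c, q - c⟫ := by
          rw [inner_sub_left]
        simp only [h1, h2]
        exact (hq (q - c)).sub tendsto_const_nhds
      have hle : ⟪q - c, q - c⟫ ≤ 0 := le_of_tendsto htt hev'
      have h3 : ‖q - c‖ ^ 2 ≤ 0 := by rw [← real_inner_self_eq_norm_sq]; exact hle
      have h4 : ‖q - c‖ = 0 := by nlinarith [norm_nonneg (q - c)]
      have h5 : q = c := by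
        rw [← sub_eq_zero]
        exact norm_eq_zero.mp h4
      rw [h5, hc]
      exact hPmem q
    have hzq : ∀ z ∈ C, 0 ≤ ⟪F z, z - q⟫ := by
      intro z hz
      set Q : ℕ → ℝ := fun k => ‖z‖ + (‖w k - y k‖ + lam k * M + B) with hQdef
      set cseq : ℕ → ℝ := fun k => (1 / b + L) * (‖w k - y k‖ * Q k) with hcseq
      have hzyB : ∀ k, ‖z - y k‖ ≤ Q k := by
        intro k
        have h1 : ‖y k‖ ≤ ‖w k - y k‖ + lam k * M + B := by
          calc ‖y k‖ = ‖(y k - w k) + (w k - x k) + x k‖ := by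
                rw [show (y k - w k) + (w k - x k) + x k = y k from by abel]
            _ ≤ ‖(y k - w k) + (w k - x k)‖ + ‖x k‖ := norm_add_le _ _
            _ ≤ ‖y k - w k‖ + ‖w k - x k‖ + ‖x k‖ := by
                linarith [norm_add_le (y k - w k) (w k - x k)]
            _ ≤ ‖w k - y k‖ + lam k * M + B := by
                rw [norm_sub_rev]
                linarith [hwxv k, hxB k]
        calc ‖z - y k‖ ≤ ‖z‖ + ‖y k‖ := norm_sub_le _ _
          _ ≤ Q k := by rw [hQdef]; dsimp only; linarith
      have hineq : ∀ k, -(cseq k) ≤ ⟪F z, z - y k⟫ := by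
        intro k
        -- projection inequality at y k
        have hproj : ⟪(w k - β k • F (w k)) - y k, z - y k⟫ ≤ 0 := by
          rw [hy k]
          exact hPchar _ z hz
        have hproj' : ⟪w k - y k, z - y k⟫ ≤ β k * ⟪F (w k), z - y k⟫ := by
          have e : (w k - β k • F (w k)) - y k = (w k - y k) - β k • F (w k) := by abel
          rw [e, inner_sub_left, real_inner_smul_left] at hproj
          linarith
        -- lower bound on ⟪F (w k), z - y k⟫
        have hcs : -(‖w k - y k‖ * ‖z - y k‖) ≤ ⟪w k - y k, z - y k⟫ := by
          have := abs_real_inner_le_norm (w k - y k) (z - y k)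
          have := neg_abs_le ⟪w k - y k, z - y k⟫
          linarith
        have hFw : -(1 / b * (‖w k - y k‖ * ‖z - y k‖)) ≤ ⟪F (w k), z - y k⟫ := by
          set t := ⟪F (w k), z - y k⟫ with ht
          set cc := ‖w k - y k‖ * ‖z - y k‖ with hcc
          have hccn : 0 ≤ cc := mul_nonneg (norm_nonneg _) (norm_nonneg _)
          rcases le_or_gt 0 t with htp | htn
          · have : -(1 / b * cc) ≤ 0 := by
              have : 0 ≤ 1 / b * cc := mul_nonneg (by positivity) hccn
              linarith
            linarith
          · have h6 : β k * t ≤ b * t :=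
              mul_le_mul_of_nonpos_right (hbβ k) (le_of_lt htn)
            have h7 : -cc ≤ b * t := by linarith [hproj', hcs]
            rw [show -(1 / b * cc) = (-cc) / b from by ring, div_le_iff₀ hb0]
            linarith
        -- Lipschitz bound
        have hLb : ⟪F (w k) - F (y k), z - y k⟫ ≤ L * ‖w k - y k‖ * ‖z - y k‖ := by
          calc ⟪F (w k) - F (y k), z - y k⟫ ≤ ‖F (w k) - F (y k)‖ * ‖z - y k‖ :=
                real_inner_le_norm _ _
            _ ≤ (L * ‖w k - y k‖) * ‖z - y k‖ :=
                mul_le_mul_of_nonneg_right (hLip _ _) (norm_nonneg _)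
            _ = L * ‖w k - y k‖ * ‖z - y k‖ := by ring
        -- monotonicity
        have hmz : ⟪F (y k), z - y k⟫ ≤ ⟪F z, z - y k⟫ := by
          have := hmono z (y k)
          rw [inner_sub_left] at this
          linarith
        have hFy : ⟪F (y k), z - y k⟫ = ⟪F (w k), z - y k⟫ - ⟪F (w k) - F (y k), z - y k⟫ := by
          rw [inner_sub_left]
          ring
        have hfin : -(1 / b * (‖w k - y k‖ * ‖z - y k‖)) - L * ‖w k - y k‖ * ‖z - y k‖
            ≤ ⟪F z, z - y k⟫ := by linarith
        have hmono2 : (1 / b + L) * (‖w k - y k‖ * ‖z - y k‖)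
            ≤ (1 / b + L) * (‖w k - y k‖ * Q k) := by
          apply mul_le_mul_of_nonneg_left _ (by positivity)
          exact mul_le_mul_of_nonneg_left (hzyB k) (norm_nonneg _)
        rw [hcseq]
        dsimp only
        nlinarith [hfin, hmono2]
      have hQt : Filter.Tendsto Q Filter.atTop (nhds (‖z‖ + (0 + 0 * M + B))) := by
        apply Filter.Tendsto.const_add
        exact (hwy0.add (hlam0.mul_const M)).add_const B
      have hc0 : Filter.Tendsto cseq Filter.atTop (nhds 0) := by
        have h0 : Filter.Tendsto (fun k => (1 / b + L) * (‖w k - y k‖ * Q k)) Filter.atTop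
            (nhds ((1 / b + L) * (0 * (‖z‖ + (0 + 0 * M + B))))) := (hwy0.mul hQt).const_mul _
        rw [show (1 / b + L) * (0 * (‖z‖ + (0 + 0 * M + B))) = 0 from by ring] at h0
        exact h0
      have hgt : Filter.Tendsto (fun k => ⟪F z, z - y k⟫) ↑𝒱 (nhds ⟪F z, z - q⟫) := by
        have h1 : ∀ k, ⟪F z, z - y k⟫ = ⟪F z, z⟫ - ⟪x k, F z⟫ - ⟪F z, y k - x k⟫ := by
          intro k
          have e1 := inner_sub_right (𝕜 := ℝ) (F z) z (y k)
          have e2 := inner_sub_right (𝕜 := ℝ) (F z) (y k) (x k)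
          have e3 : ⟪x k, F z⟫ = ⟪F z, x k⟫ := real_inner_comm _ _
          linarith
        have h2 : ⟪F z, z - q⟫ = ⟪F z, z⟫ - ⟪q, F z⟫ - 0 := by
          rw [inner_sub_right, real_inner_comm q (F z)]
          ring
        simp only [h1, h2]
        have h3 : Filter.Tendsto (fun k => ⟪F z, y k - x k⟫) Filter.atTop (nhds 0) := by
          apply squeeze_zero_norm (a := fun k => ‖F z‖ * ‖y k - x k‖)
          · intro k
            rw [Real.norm_eq_abs]
            exact abs_real_inner_le_norm _ _
          · simpa using hyx0.const_mul ‖F z‖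
        exact (tendsto_const_nhds.sub (hq (F z))).sub (h3.mono_left hV)
      have hnn : ∀ k, 0 ≤ ⟪F z, z - y k⟫ + cseq k := by
        intro k
        have := hineq k
        linarith
      have hlim : Filter.Tendsto (fun k => ⟪F z, z - y k⟫ + cseq k) ↑𝒱
          (nhds (⟪F z, z - q⟫ + 0)) := hgt.add (hc0.mono_left hV)
      have := ge_of_tendsto' hlim hnn
      linarith
    -- Minty argument
    have hqS : ∀ z ∈ C, 0 ≤ ⟪F q, z - q⟫ := by
      intro z hz
      have hzt : ∀ n : ℕ, 0 ≤ ⟪F (q + ((1:ℝ)/(n+1)) • (z - q)), z - q⟫ := by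
        intro n
        set t : ℝ := (1:ℝ)/(n+1) with htd
        have ht0 : 0 < t := by positivity
        have ht1 : t ≤ 1 := by
          rw [htd, div_le_one (by positivity)]
          have : (0:ℝ) ≤ n := Nat.cast_nonneg n
          linarith
        have hmem : q + t • (z - q) ∈ C := by
          have h1 : (1 - t) • q + t • z ∈ C :=
            hCcv hqC hz (by linarith) (le_of_lt ht0) (by ring)
          have h2 : q + t • (z - q) = (1 - t) • q + t • z := by
            rw [smul_sub, sub_smul, one_smul]
            abel
          rw [h2]
          exact h1
        have h1 := hzq _ hmem
        have h2 : q + t • (z - q) - q = t • (z - q) := by abel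
        rw [h2, real_inner_smul_right] at h1
        nlinarith [h1, ht0]
      have hFt : Filter.Tendsto (fun n : ℕ => ⟪F (q + ((1:ℝ)/(n+1)) • (z - q)), z - q⟫)
          Filter.atTop (nhds ⟪F q, z - q⟫) := by
        have h1 : ∀ n : ℕ, ⟪F (q + ((1:ℝ)/(n+1)) • (z - q)), z - q⟫
            = ⟪F q, z - q⟫ + ⟪F (q + ((1:ℝ)/(n+1)) • (z - q)) - F q, z - q⟫ := by
          intro n
          rw [inner_sub_left]
          ring
        simp only [h1]
        have h2 : Filter.Tendsto
            (fun n : ℕ => ⟪F (q + ((1:ℝ)/(n+1)) • (z - q)) - F q, z - q⟫)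
            Filter.atTop (nhds 0) := by
          apply squeeze_zero_norm (a := fun n : ℕ => (L * ‖z - q‖ ^ 2) * ((1:ℝ)/(n+1)))
          · intro n
            rw [Real.norm_eq_abs]
            calc |⟪F (q + ((1:ℝ)/(n+1)) • (z - q)) - F q, z - q⟫|
                ≤ ‖F (q + ((1:ℝ)/(n+1)) • (z - q)) - F q‖ * ‖z - q‖ :=
                  abs_real_inner_le_norm _ _
              _ ≤ (L * ‖q + ((1:ℝ)/(n+1)) • (z - q) - q‖) * ‖z - q‖ :=
                  mul_le_mul_of_nonneg_right (hLip _ _) (norm_nonneg _)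
              _ = (L * ‖z - q‖ ^ 2) * ((1:ℝ)/(n+1)) := by
                  rw [show q + ((1:ℝ)/(n+1)) • (z - q) - q = ((1:ℝ)/(n+1)) • (z - q) from by
                    abel, norm_smul, Real.norm_eq_abs, abs_of_pos (by positivity)]
                  ring
          · have := tendsto_one_div_add_atTop_nhds_zero_nat.const_mul (L * ‖z - q‖ ^ 2)
            simpa using this
        have := h2.const_add ⟪F q, z - q⟫
        simpa using this
      exact ge_of_tendsto' hFt hzt
    exact ⟨q, ⟨hqC, hqS⟩, hq⟩
  -- final assembly via Opial-type uniqueness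
  obtain ⟨xhat, hxhatP, hxhatT⟩ := hmain (Ultrafilter.of Filter.atTop) (Ultrafilter.of_le _)
  refine ⟨xhat, hxhatP, ?_⟩
  intro u
  rw [Filter.tendsto_iff_ultrafilter]
  intro 𝒱 hV
  obtain ⟨q, hqP, hqT⟩ := hmain 𝒱 hV
  obtain ⟨l1, hl1⟩ := (hmainFej xhat hxhatP.1 hxhatP.2).1
  obtain ⟨l2, hl2⟩ := (hmainFej q hqP.1 hqP.2).1
  have hid : ∀ k, ⟪x k, q - xhat⟫
      = (‖x k - xhat‖ ^ 2 - ‖x k - q‖ ^ 2 - ‖xhat‖ ^ 2 + ‖q‖ ^ 2) / 2 := by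
    intro k
    have e1 := norm_sub_sq_real (x k) xhat
    have e2 := norm_sub_sq_real (x k) q
    have e3 := inner_sub_right (𝕜 := ℝ) (x k) q xhat
    linarith
  have hipt : Filter.Tendsto (fun k => ⟪x k, q - xhat⟫) Filter.atTop
      (nhds ((l1 - l2 - ‖xhat‖ ^ 2 + ‖q‖ ^ 2) / 2)) := by
    simp only [hid]
    exact (((hl1.sub hl2).sub_const (‖xhat‖ ^ 2)).add_const (‖q‖ ^ 2)).div_const 2
  have huniq1 : ⟪xhat, q - xhat⟫ = (l1 - l2 - ‖xhat‖ ^ 2 + ‖q‖ ^ 2) / 2 :=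
    tendsto_nhds_unique (hxhatT (q - xhat)) (hipt.mono_left (Ultrafilter.of_le _))
  have huniq2 : ⟪q, q - xhat⟫ = (l1 - l2 - ‖xhat‖ ^ 2 + ‖q‖ ^ 2) / 2 :=
    tendsto_nhds_unique (hqT (q - xhat)) (hipt.mono_left hV)
  have hqx : q = xhat := by
    have h0 : ⟪q - xhat, q - xhat⟫ = (0:ℝ) := by
      rw [inner_sub_left]
      linarith
    rw [← sub_eq_zero]
    exact inner_self_eq_zero.mp h0
  rw [← hqx]
  exact hqT u
end
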